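/- arXiv:2301.02055 — 4 statements merged into one kernel-verified Lean document; each statement's English description precedes it below -/
import Mathlib

section
/- Error control of the L-scheme to Newton switching step (Proposition 3.1). Suppose: (i) the L-scheme identity with parameter L > 0 holds at step i (iterates ψ_{i-1}, ψ_i, previous time-step solution ψ_prev) tested against δ := ψ̃_{i+1} − ψ_i; (ii) the Newton identity holds at step i+1 with iterates ψ_i, ψ̃_{i+1} (same ψ_prev) tested against δ; (iii) there is a constant C_N ∈ [0,2) such that τ·|K(θ(ψ_i(x)))^{-1/2} M(ψ_i(x))(∇ψ_i(x)+e)|² ≤ C_N²·θ'(ψ_i(x)) for a.e. x ∈ Ω; (iv) D ⊆ Ω is a measurable set (the degenerate region) with θ'(ψ_i(x)) > 0 for a.e. x ∈ Ω\D; (v) σ : Ω → ℝ^d satisfies the equilibrated-flux identity ∫_Ω ⟨σ, ∇δ⟩ = −(1/τ) ∫_D (L(ψ_i−ψ_{i-1}) − (θ(ψ_i)−θ(ψ_{i-1})))·δ. Then ‖δ‖_{N,ψ_i} ≤ (2/(2−C_N))·(η_poten² + τ·η_flux²)^{1/2}, where η_poten² := ∫_{Ω\D} (L(ψ_i−ψ_{i-1})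 − (θ(ψ_i)−θ(ψ_{i-1})))² / θ'(ψ_i) and η_flux² := ∫_Ω |K(θ(ψ_i))^{-1/2}[(K(θ(ψ_i)) − K(θ(ψ_{i-1})))(∇ψ_i + e) + σ]|². -/
/-!
Subtracting the L-scheme identity from the Newton identity (both tested with `δ`) expresses
`‖δ‖²_{N,ψ_i}` through three pairings with `δ`: the L-scheme residual
`R = L(ψ_i - ψ_{i-1}) - (θ(ψ_i) - θ(ψ_{i-1}))`, the permeability jump, and the convection term.
The equilibrated flux `σ` trades the part of the residual pairing over the degenerate region `D`
for a flux pairing, so that only `Ω \ D`, where `θ'(ψ_i) > 0`, carries `R` itself.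
Young's inequality with weight `ε` bounds the residual and flux pairings by
`ε/2 · η² + 1/(2ε) · ‖δ‖²`, and the non-dominance condition bounds the convection pairing
by `C_N/2 · ‖δ‖²`. Optimising over `ε` gives `(1 - C_N/2) ‖δ‖ ≤ η`.
-/

open MeasureTheory
open scoped RealInnerProductSpace

section
variable {E : Type*} [NormedAddCommGroup E] [InnerProductSpace ℝ E]

theorem inner_sq_le_inner_inv_mul_inner {A B : E →L[ℝ] E}
    (hsymm : ∀ v w, ⟪A v, w⟫ = ⟪v, A w⟫) (hpos : ∀ w, 0 ≤ ⟪A w, w⟫)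
    (hAB : ∀ w, A (B w) = w) (w v : E) :
    ⟪w, v⟫ ^ 2 ≤ ⟪B w, w⟫ * ⟪A v, v⟫ := by
  have h := LinearMap.BilinForm.apply_mul_apply_le_of_forall_zero_le
    ((innerₗ E).comp A.toLinearMap) hpos (B w) v
  simp only [LinearMap.comp_apply, ContinuousLinearMap.coe_coe, innerₗ_apply_apply, hAB] at h
  rwa [hsymm, hAB, real_inner_comm w v, ← sq, real_inner_comm (B w) w] at h

theorem inner_inv_apply_self_nonneg {A B : E →L[ℝ] E} (hpos : ∀ w, 0 ≤ ⟪A w, w⟫)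
    (hAB : ∀ w, A (B w) = w) (w : E) : 0 ≤ ⟪B w, w⟫ := by
  simpa [hAB, real_inner_comm] using hpos (B w)

end

theorem abs_le_add_div_two_of_sq_le_mul {u a b : ℝ} (ha : 0 ≤ a) (hb : 0 ≤ b)
    (h : u ^ 2 ≤ a * b) : |u| ≤ (a + b) / 2 :=
  abs_le_of_sq_le_sq (by nlinarith [sq_nonneg (a - b)]) (by positivity)

theorem le_sqrt_mul_sqrt_of_forall_pos {x a b : ℝ} (ha : 0 ≤ a) (hb : 0 ≤ b)
    (h : ∀ ε > 0, 2 * x ≤ ε * a + ε⁻¹ * b) : x ≤ √a * √b := by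
  rcases ha.eq_or_lt with rfl | ha
  · by_contra! hx
    rw [Real.sqrt_zero, zero_mul] at hx
    have := h ((b + 1) / x) (by positivity)
    rw [mul_zero, zero_add, inv_div, div_mul_eq_mul_div, le_div_iff₀ (by positivity)] at this
    nlinarith
  rcases hb.eq_or_lt with rfl | hb
  · by_contra! hx
    rw [Real.sqrt_zero, mul_zero] at hx
    have := h (x / (a + 1)) (by positivity)
    rw [mul_zero, add_zero, div_mul_eq_mul_div, le_div_iff₀ (by positivity)] at this
    nlinarith
  have hε := h (√b / √a) (by positivity)
  have hsa := Real.sq_sqrt ha.le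
  have hsb := Real.sq_sqrt hb.le
  have : √b / √a * a + (√b / √a)⁻¹ * b = 2 * (√a * √b) := by
    have := Real.sqrt_pos.2 ha
    have := Real.sqrt_pos.2 hb
    field_simp
    linear_combination -(√b ^ 2 * hsa) - √a ^ 2 * hsb
  linarith

theorem sqrt_le_div_mul_sqrt_of_forall_pos {N E c : ℝ} (hN : 0 ≤ N) (hE : 0 ≤ E) (hc : c < 2)
    (h : ∀ ε > 0, 2 * N ≤ ε * E + ε⁻¹ * N + c * N) : √N ≤ 2 / (2 - c) * √E := by
  have key : (2 - c) / 2 * N ≤ √E * √N :=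
    le_sqrt_mul_sqrt_of_forall_pos hE hN fun ε hε => by linarith [h ε hε]
  rcases (Real.sqrt_nonneg N).eq_or_lt with h0 | hpos
  · rw [← h0]
    exact mul_nonneg (div_nonneg two_pos.le (by linarith)) (Real.sqrt_nonneg _)
  rw [div_mul_eq_mul_div, le_div_iff₀ (by linarith), ← mul_le_mul_iff_left₀ hpos]
  nlinarith [Real.mul_self_sqrt hN]

section
variable {X E : Type*} [MeasurableSpace X] [NormedAddCommGroup E] [InnerProductSpace ℝ E]
  {μ : Measure X}

theorem two_mul_abs_integral_le_of_sq_le_mul {u a b : X → ℝ}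
    (hab : Integrable (fun x => a x + b x) μ) (ha : ∀ᵐ x ∂μ, 0 ≤ a x) (hb : ∀ᵐ x ∂μ, 0 ≤ b x)
    (h : ∀ᵐ x ∂μ, u x ^ 2 ≤ a x * b x) :
    2 * |∫ x, u x ∂μ| ≤ ∫ x, (a x + b x) ∂μ := by
  by_cases hu : Integrable u μ
  · have hpt : ∀ᵐ x ∂μ, |u x| ≤ (a x + b x) / 2 := by
      filter_upwards [ha, hb, h] with x hax hbx hx
      exact abs_le_add_div_two_of_sq_le_mul hax hbx hx
    calc 2 * |∫ x, u x ∂μ| ≤ 2 * ∫ x, |u x| ∂μ := by gcongr; exact abs_integral_le_integral_abs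
      _ ≤ 2 * ∫ x, (a x + b x) / 2 ∂μ :=
        mul_le_mul_of_nonneg_left (integral_mono_ae hu.abs (hab.div_const 2) hpt) two_pos.le
      _ = ∫ x, (a x + b x) ∂μ := by rw [integral_div]; ring
  · rw [integral_undef hu, abs_zero, mul_zero]
    exact integral_nonneg_of_ae (by filter_upwards [ha, hb] with x hax hbx using add_nonneg hax hbx)

theorem two_mul_setIntegral_sdiff_mul_le {Ω D : Set X} {r t u : X → ℝ} {ε : ℝ} (hε : 0 < ε)
    (ht : ∀ x, 0 ≤ t x) (htpos : ∀ᵐ x ∂μ.restrict (Ω \ D), 0 < t x)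
    (hr : IntegrableOn (fun x => r x ^ 2 / t x) (Ω \ D) μ)
    (hu : IntegrableOn (fun x => t x * u x ^ 2) Ω μ) :
    2 * ∫ x in Ω \ D, r x * u x ∂μ
      ≤ ε * (∫ x in Ω \ D, r x ^ 2 / t x ∂μ) + ε⁻¹ * ∫ x in Ω, t x * u x ^ 2 ∂μ := by
  have hr' := hr.const_mul ε
  have hu' := (hu.mono_set (Set.sdiff_subset (t := D))).const_mul ε⁻¹
  have hyoung := two_mul_abs_integral_le_of_sq_le_mul (u := fun x => r x * u x) (hr'.add hu')
    (ae_of_all _ fun x => by have := ht x; positivity)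
    (ae_of_all _ fun x => by have := ht x; positivity)
    (htpos.mono fun x hx => by field_simp; exact le_rfl)
  have hmono : ∫ x in Ω \ D, t x * u x ^ 2 ∂μ ≤ ∫ x in Ω, t x * u x ^ 2 ∂μ :=
    setIntegral_mono_set hu (ae_of_all _ fun x => by have := ht x; positivity)
      Set.sdiff_subset.eventuallyLE
  rw [integral_add hr' hu', integral_const_mul, integral_const_mul] at hyoung
  linarith [le_abs_self (∫ x in Ω \ D, r x * u x ∂μ),
    mul_le_mul_of_nonneg_left hmono (inv_nonneg.2 hε.le)]

theorem neg_two_mul_integral_inner_le {A B : X → E →L[ℝ] E} {F g : X → E} {ε : ℝ} (hε : 0 < ε)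
    (hsymm : ∀ x v w, ⟪A x v, w⟫ = ⟪v, A x w⟫) (hpos : ∀ x w, 0 ≤ ⟪A x w, w⟫)
    (hAB : ∀ x w, A x (B x w) = w)
    (hF : Integrable (fun x => ⟪B x (F x), F x⟫) μ)
    (hg : Integrable (fun x => ⟪A x (g x), g x⟫) μ) :
    -(2 * ∫ x, ⟪F x, g x⟫ ∂μ)
      ≤ ε * (∫ x, ⟪B x (F x), F x⟫ ∂μ) + ε⁻¹ * ∫ x, ⟪A x (g x), g x⟫ ∂μ := by
  have hF' := hF.const_mul ε
  have hg' := hg.const_mul ε⁻¹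
  have hyoung := two_mul_abs_integral_le_of_sq_le_mul (hF'.add hg')
    (ae_of_all _ fun x => mul_nonneg hε.le (inner_inv_apply_self_nonneg (hpos x) (hAB x) _))
    (ae_of_all _ fun x => mul_nonneg (inv_nonneg.2 hε.le) (hpos x _))
    (ae_of_all _ fun x => by
      rw [mul_mul_mul_comm, mul_inv_cancel₀ hε.ne', one_mul]
      exact inner_sq_le_inner_inv_mul_inner (hsymm x) (hpos x) (hAB x) _ _)
  rw [integral_add hF' hg', integral_const_mul, integral_const_mul] at hyoung
  linarith [neg_abs_le (∫ x, ⟪F x, g x⟫ ∂μ)]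

theorem neg_two_mul_integral_mul_inner_le {A B : X → E →L[ℝ] E} {t u : X → ℝ} {m g : X → E}
    {τ c : ℝ} (hτ : 0 ≤ τ) (hc : 0 ≤ c) (ht : ∀ x, 0 ≤ t x)
    (hsymm : ∀ x v w, ⟪A x v, w⟫ = ⟪v, A x w⟫) (hpos : ∀ x w, 0 ≤ ⟪A x w, w⟫)
    (hAB : ∀ x w, A x (B x w) = w) (hm : ∀ᵐ x ∂μ, τ * ⟪B x (m x), m x⟫ ≤ c ^ 2 * t x)
    (hN : Integrable (fun x => t x * u x ^ 2 + τ * ⟪A x (g x), g x⟫) μ) :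
    -(2 * (τ * ∫ x, u x * ⟪m x, g x⟫ ∂μ))
      ≤ c * ∫ x, (t x * u x ^ 2 + τ * ⟪A x (g x), g x⟫) ∂μ := by
  have hyoung := two_mul_abs_integral_le_of_sq_le_mul (u := fun x => τ * (u x * ⟪m x, g x⟫))
    ((hN.const_mul c).congr (ae_of_all _ fun x => mul_add _ _ _))
    (ae_of_all _ fun x => by have := ht x; positivity)
    (ae_of_all _ fun x => by have := hpos x (g x); positivity)
    (hm.mono fun x hx => by
      have hcs := inner_sq_le_inner_inv_mul_inner (hsymm x) (hpos x) (hAB x) (m x) (g x)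
      have hA := hpos x (g x)
      calc (τ * (u x * ⟪m x, g x⟫)) ^ 2 = τ * u x ^ 2 * (τ * ⟪m x, g x⟫ ^ 2) := by ring
        _ ≤ τ * u x ^ 2 * (τ * ⟪B x (m x), m x⟫ * ⟪A x (g x), g x⟫) := by
          rw [mul_assoc τ (⟪B x (m x), m x⟫)]
          exact mul_le_mul_of_nonneg_left (mul_le_mul_of_nonneg_left hcs hτ) (by positivity)
        _ ≤ τ * u x ^ 2 * (c ^ 2 * t x * ⟪A x (g x), g x⟫) :=
          mul_le_mul_of_nonneg_left (mul_le_mul_of_nonneg_right hx hA) (by positivity)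
        _ = c * (t x * u x ^ 2) * (c * (τ * ⟪A x (g x), g x⟫)) := by ring)
  simp only [← mul_add, integral_const_mul] at hyoung
  linarith [neg_abs_le (τ * ∫ x, u x * ⟪m x, g x⟫ ∂μ)]


theorem MeasureTheory.Integrable.of_add_const_mul {a b : X → ℝ} {τ : ℝ} (hτ : τ ≠ 0) (ha : Integrable a μ)
    (hab : Integrable (fun x => a x + τ * b x) μ) : Integrable b μ :=
  ((hab.sub ha).const_mul τ⁻¹).congr (ae_of_all _ fun x => by simp [hτ])

end

section
variable {X E : Type*} [MeasurableSpace X] [NormedAddCommGroup E] [InnerProductSpace ℝ E]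
  {μ : Measure X} {Ω D : Set X} {θ θ' : ℝ → ℝ} {K M : ℝ → E →L[ℝ] E} {τ L : ℝ} {f : X → ℝ}
  {e : E} {ψprev ψim1 ψi δ : X → ℝ} {gψi gδ σ : X → E}

theorem energy_eq_of_Lscheme_of_Newton (hD : MeasurableSet D) (hDΩ : D ⊆ Ω) (hτ : τ ≠ 0)
    (hLscheme :
      (∫ x in Ω, L * (ψi x - ψim1 x) * δ x ∂μ)
        + τ * ∫ x in Ω, ⟪K (θ (ψim1 x)) (gψi x + e), gδ x⟫ ∂μ
      = τ * (∫ x in Ω, f x * δ x ∂μ) - ∫ x in Ω, (θ (ψim1 x) - θ (ψprev x)) * δ x ∂μ)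
    (hNewton :
      (∫ x in Ω, θ' (ψi x) * δ x ^ 2 ∂μ)
        + τ * (∫ x in Ω, ⟪K (θ (ψi x)) (gδ x + (gψi x + e)), gδ x⟫ ∂μ)
        + τ * (∫ x in Ω, δ x * ⟪M (ψi x) (gψi x + e), gδ x⟫ ∂μ)
      = τ * (∫ x in Ω, f x * δ x ∂μ) - ∫ x in Ω, (θ (ψi x) - θ (ψprev x)) * δ x ∂μ)
    (hσ : (∫ x in Ω, ⟪σ x, gδ x⟫ ∂μ)
      = -(1 / τ) * ∫ x in D, (L * (ψi x - ψim1 x) - (θ (ψi x) - θ (ψim1 x))) * δ x ∂μ)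
    (hI1 : IntegrableOn (fun x => L * (ψi x - ψim1 x) * δ x) Ω μ)
    (hI2 : IntegrableOn (fun x => ⟪K (θ (ψim1 x)) (gψi x + e), gδ x⟫) Ω μ)
    (hI4 : IntegrableOn (fun x => (θ (ψim1 x) - θ (ψprev x)) * δ x) Ω μ)
    (hI6 : IntegrableOn (fun x => ⟪K (θ (ψi x)) (gδ x + (gψi x + e)), gδ x⟫) Ω μ)
    (hI8 : IntegrableOn (fun x => (θ (ψi x) - θ (ψprev x)) * δ x) Ω μ)
    (hI9 : IntegrableOn (fun x => ⟪σ x, gδ x⟫) Ω μ)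
    (hkgg : IntegrableOn (fun x => ⟪K (θ (ψi x)) (gδ x), gδ x⟫) Ω μ) :
    (∫ x in Ω, θ' (ψi x) * δ x ^ 2 ∂μ) + τ * ∫ x in Ω, ⟪K (θ (ψi x)) (gδ x), gδ x⟫ ∂μ
      = (∫ x in Ω \ D, (L * (ψi x - ψim1 x) - (θ (ψi x) - θ (ψim1 x))) * δ x ∂μ)
        - τ * (∫ x in Ω, ⟪(K (θ (ψi x)) - K (θ (ψim1 x))) (gψi x + e) + σ x, gδ x⟫ ∂μ)
        - τ * ∫ x in Ω, δ x * ⟪M (ψi x) (gψi x + e), gδ x⟫ ∂μ := by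
  have hkb : IntegrableOn (fun x => ⟪K (θ (ψi x)) (gψi x + e), gδ x⟫) Ω μ :=
    (hI6.sub hkgg).congr (ae_of_all _ fun x => by simp [inner_add_left])
  have hRsplit : ∀ x, (L * (ψi x - ψim1 x) - (θ (ψi x) - θ (ψim1 x))) * δ x
      = L * (ψi x - ψim1 x) * δ x - (θ (ψi x) - θ (ψprev x)) * δ x
        + (θ (ψim1 x) - θ (ψprev x)) * δ x := fun x => by ring
  have hR : IntegrableOn
      (fun x => (L * (ψi x - ψim1 x) - (θ (ψi x) - θ (ψim1 x))) * δ x) Ω μ :=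
    ((hI1.sub hI8).add hI4).congr (ae_of_all _ fun x => (hRsplit x).symm)
  have hsplitK : ∫ x in Ω, ⟪K (θ (ψi x)) (gδ x + (gψi x + e)), gδ x⟫ ∂μ
      = (∫ x in Ω, ⟪K (θ (ψi x)) (gδ x), gδ x⟫ ∂μ)
        + ∫ x in Ω, ⟪K (θ (ψi x)) (gψi x + e), gδ x⟫ ∂μ := by
    rw [← integral_add hkgg hkb]
    simp only [map_add, inner_add_left]
  have hsplitF : ∫ x in Ω, ⟪(K (θ (ψi x)) - K (θ (ψim1 x))) (gψi x + e) + σ x, gδ x⟫ ∂μ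
      = (∫ x in Ω, ⟪K (θ (ψi x)) (gψi x + e), gδ x⟫ ∂μ)
        - (∫ x in Ω, ⟪K (θ (ψim1 x)) (gψi x + e), gδ x⟫ ∂μ) + ∫ x in Ω, ⟪σ x, gδ x⟫ ∂μ := by
    simp only [sub_apply, inner_add_left, inner_sub_left]
    rw [integral_add _ hI9, integral_sub hkb hI2]
    exact hkb.sub hI2
  have hsplitR : ∫ x in Ω, (L * (ψi x - ψim1 x) - (θ (ψi x) - θ (ψim1 x))) * δ x ∂μ
      = (∫ x in Ω, L * (ψi x - ψim1 x) * δ x ∂μ)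
        - (∫ x in Ω, (θ (ψi x) - θ (ψprev x)) * δ x ∂μ)
        + ∫ x in Ω, (θ (ψim1 x) - θ (ψprev x)) * δ x ∂μ := by
    simp only [hRsplit]
    rw [integral_add _ hI4, integral_sub hI1 hI8]
    exact hI1.sub hI8
  have hRD : ∫ x in D, (L * (ψi x - ψim1 x) - (θ (ψi x) - θ (ψim1 x))) * δ x ∂μ
      = -τ * ∫ x in Ω, ⟪σ x, gδ x⟫ ∂μ := by
    rw [hσ]; field_simp
  rw [setIntegral_sdiff hD hR hDΩ, hRD, hsplitF, hsplitR]
  rw [hsplitK] at hNewton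
  linear_combination hNewton - hLscheme

end

theorem Lscheme_to_Newton_switching_error_control_general
    (d : ℕ)
    (Ω : Set (EuclideanSpace ℝ (Fin d)))
    -- saturation function and its derivative
    (θ θ' : ℝ → ℝ)
    (hθ'nonneg : ∀ s : ℝ, 0 ≤ θ' s)
    -- permeability, its inverse, and the derivative of `s ↦ K(θ(s))`
    (K Kinv M : ℝ → EuclideanSpace ℝ (Fin d) →L[ℝ] EuclideanSpace ℝ (Fin d))
    (κm : ℝ) (hκm : 0 < κm)
    (hKsymm : ∀ (s : ℝ) (v w : EuclideanSpace ℝ (Fin d)), ⟪K s v, w⟫ = ⟪v, K s w⟫)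
    (hKlower : ∀ (s : ℝ) (w : EuclideanSpace ℝ (Fin d)), κm * ‖w‖ ^ 2 ≤ ⟪K s w, w⟫)
    (hKinv : ∀ (s : ℝ) (w : EuclideanSpace ℝ (Fin d)),
      Kinv s (K s w) = w ∧ K s (Kinv s w) = w)
    -- time step, source term, gravity direction, L-scheme parameter
    (τ : ℝ) (hτ : 0 < τ)
    (f : EuclideanSpace ℝ (Fin d) → ℝ)
    (e : EuclideanSpace ℝ (Fin d))
    (L : ℝ)
    -- iterates and their gradients
    (ψprev ψim1 ψi ψt : EuclideanSpace ℝ (Fin d) → ℝ)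
    (gψi gψt : EuclideanSpace ℝ (Fin d) → EuclideanSpace ℝ (Fin d))
    (δ : EuclideanSpace ℝ (Fin d) → ℝ)
    (hδ : δ = fun x => ψt x - ψi x)
    (gδ : EuclideanSpace ℝ (Fin d) → EuclideanSpace ℝ (Fin d))
    (hgδ : gδ = fun x => gψt x - gψi x)
    -- (i) L-scheme identity at step `i` tested against `δ`
    (hLscheme :
      (∫ x in Ω, L * (ψi x - ψim1 x) * δ x)
        + τ * ∫ x in Ω, ⟪K (θ (ψim1 x)) (gψi x + e), gδ x⟫
      = τ * (∫ x in Ω, f x * δ x)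
        - ∫ x in Ω, (θ (ψim1 x) - θ (ψprev x)) * δ x)
    -- (ii) Newton identity at step `i+1` (iterates `ψ_i`, `ψ̃_{i+1}`) tested against `δ`
    (hNewton :
      (∫ x in Ω, θ' (ψi x) * (ψt x - ψi x) * δ x)
        + τ * (∫ x in Ω, ⟪K (θ (ψi x)) (gψt x + e), gδ x⟫)
        + τ * (∫ x in Ω, (ψt x - ψi x) * ⟪M (ψi x) (gψi x + e), gδ x⟫)
      = τ * (∫ x in Ω, f x * δ x)
        - ∫ x in Ω, (θ (ψi x) - θ (ψprev x)) * δ x)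
    -- (iii) the convection term is not dominant
    (CN : ℝ) (hCN0 : 0 ≤ CN) (hCN2 : CN < 2)
    (hconv : ∀ᵐ x ∂(volume.restrict Ω),
      τ * ⟪Kinv (θ (ψi x)) (M (ψi x) (gψi x + e)), M (ψi x) (gψi x + e)⟫
        ≤ CN ^ 2 * θ' (ψi x))
    -- (iv) degenerate region
    (D : Set (EuclideanSpace ℝ (Fin d))) (hD : MeasurableSet D) (hDΩ : D ⊆ Ω)
    (hθ'pos : ∀ᵐ x ∂(volume.restrict (Ω \ D)), 0 < θ' (ψi x))
    -- (v) equilibrated-flux identity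
    (σ : EuclideanSpace ℝ (Fin d) → EuclideanSpace ℝ (Fin d))
    (hσ : (∫ x in Ω, ⟪σ x, gδ x⟫)
      = -(1 / τ) * ∫ x in D,
          (L * (ψi x - ψim1 x) - (θ (ψi x) - θ (ψim1 x))) * δ x)
    -- integrability of all integrands appearing
    (hI1 : IntegrableOn (fun x => L * (ψi x - ψim1 x) * δ x) Ω)
    (hI2 : IntegrableOn (fun x => ⟪K (θ (ψim1 x)) (gψi x + e), gδ x⟫) Ω)
    (hI4 : IntegrableOn (fun x => (θ (ψim1 x) - θ (ψprev x)) * δ x) Ω)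
    (hI5 : IntegrableOn (fun x => θ' (ψi x) * (ψt x - ψi x) * δ x) Ω)
    (hI6 : IntegrableOn (fun x => ⟪K (θ (ψi x)) (gψt x + e), gδ x⟫) Ω)
    (hI8 : IntegrableOn (fun x => (θ (ψi x) - θ (ψprev x)) * δ x) Ω)
    (hI9 : IntegrableOn (fun x => ⟪σ x, gδ x⟫) Ω)
    (hI11 : IntegrableOn
      (fun x => θ' (ψi x) * δ x ^ 2 + τ * ⟪K (θ (ψi x)) (gδ x), gδ x⟫) Ω)
    (hI12 : IntegrableOn
      (fun x => (L * (ψi x - ψim1 x) - (θ (ψi x) - θ (ψim1 x))) ^ 2 / θ' (ψi x))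
      (Ω \ D))
    (hI13 : IntegrableOn
      (fun x => ⟪Kinv (θ (ψi x))
            ((K (θ (ψi x)) - K (θ (ψim1 x))) (gψi x + e) + σ x),
          (K (θ (ψi x)) - K (θ (ψim1 x))) (gψi x + e) + σ x⟫) Ω) :
    Real.sqrt (∫ x in Ω,
        (θ' (ψi x) * δ x ^ 2 + τ * ⟪K (θ (ψi x)) (gδ x), gδ x⟫))
      ≤ (2 / (2 - CN)) * Real.sqrt
          ((∫ x in Ω \ D,
              (L * (ψi x - ψim1 x) - (θ (ψi x) - θ (ψim1 x))) ^ 2 / θ' (ψi x))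
            + τ * ∫ x in Ω,
                ⟪Kinv (θ (ψi x))
                    ((K (θ (ψi x)) - K (θ (ψim1 x))) (gψi x + e) + σ x),
                  (K (θ (ψi x)) - K (θ (ψim1 x))) (gψi x + e) + σ x⟫) := by
  have hθ'δ : ∀ x, θ' (ψi x) * (ψt x - ψi x) * δ x = θ' (ψi x) * δ x ^ 2 := fun x => by
    rw [hδ]; ring
  have hψt : ∀ x, ψt x - ψi x = δ x := fun x => by rw [hδ]
  have hgψt : ∀ x, gψt x + e = gδ x + (gψi x + e) := fun x => by simp only [hgδ]; abel
  simp only [hθ'δ] at hNewton hI5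
  simp only [hψt, hgψt] at hNewton hI6
  have hKpos : ∀ s w, 0 ≤ ⟪K s w, w⟫ := fun s w => le_trans (by positivity) (hKlower s w)
  have hKK : ∀ s w, K s (Kinv s w) = w := fun s w => (hKinv s w).2
  have hkgg := Integrable.of_add_const_mul hτ.ne' hI5 hI11
  have henergy := energy_eq_of_Lscheme_of_Newton hD hDΩ hτ.ne' hLscheme hNewton hσ
    hI1 hI2 hI4 hI6 hI8 hI9 hkgg
  have hN : ∫ x in Ω, (θ' (ψi x) * δ x ^ 2 + τ * ⟪K (θ (ψi x)) (gδ x), gδ x⟫)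
      = (∫ x in Ω, θ' (ψi x) * δ x ^ 2) + τ * ∫ x in Ω, ⟪K (θ (ψi x)) (gδ x), gδ x⟫ := by
    rw [integral_add hI5 (hkgg.const_mul τ), integral_const_mul]
  refine sqrt_le_div_mul_sqrt_of_forall_pos (integral_nonneg fun x => ?_)
    (add_nonneg (integral_nonneg fun x => ?_) (mul_nonneg hτ.le (integral_nonneg fun x => ?_)))
    hCN2 fun ε hε => ?_
  · have := hKpos (θ (ψi x)) (gδ x); have := hθ'nonneg (ψi x); positivity
  · exact div_nonneg (sq_nonneg _) (hθ'nonneg _)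
  · exact inner_inv_apply_self_nonneg (hKpos _) (hKK _) _
  have hpot := two_mul_setIntegral_sdiff_mul_le hε (fun x => hθ'nonneg (ψi x)) hθ'pos hI12 hI5
  have hflux := neg_two_mul_integral_inner_le hε (fun x => hKsymm (θ (ψi x))) (fun x => hKpos _)
    (fun x => hKK _) hI13 hkgg
  have hconvection := neg_two_mul_integral_mul_inner_le hτ.le hCN0 (fun x => hθ'nonneg (ψi x))
    (fun x => hKsymm (θ (ψi x))) (fun x => hKpos _) (fun x => hKK _) hconv hI11
  rw [hN] at hconvection ⊢
  linarith [mul_le_mul_of_nonneg_left hflux hτ.le]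

/-- **Error control of the L-scheme to Newton switching step** (Proposition 3.1).
Given the L-scheme identity at step `i` and the Newton identity at step `i+1`
(both tested against `δ := ψ̃_{i+1} − ψ_i`), the non-dominance of the convection
term with constant `C_N ∈ [0,2)`, positivity of `θ'(ψ_i)` outside the degenerate
region `D`, and an equilibrated flux `σ`, one has
`‖δ‖_{N,ψ_i} ≤ (2/(2−C_N))·(η_poten² + τ·η_flux²)^{1/2}`. -/
theorem Lscheme_to_Newton_switching_error_control
    (d : ℕ) (hd : 1 ≤ d)
    (Ω : Set (EuclideanSpace ℝ (Fin d))) (hΩ : MeasurableSet Ω)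
    -- saturation function and its derivative
    (θ θ' : ℝ → ℝ)
    (hθdiff : ∀ s : ℝ, HasDerivAt θ (θ' s) s)
    (hθ'nonneg : ∀ s : ℝ, 0 ≤ θ' s)
    -- permeability, its inverse, and the derivative of `s ↦ K(θ(s))`
    (K Kinv M : ℝ → EuclideanSpace ℝ (Fin d) →L[ℝ] EuclideanSpace ℝ (Fin d))
    (κm κM : ℝ) (hκm : 0 < κm) (hκmM : κm ≤ κM)
    (hKsymm : ∀ (s : ℝ) (v w : EuclideanSpace ℝ (Fin d)), ⟪K s v, w⟫ = ⟪v, K s w⟫)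
    (hKlower : ∀ (s : ℝ) (w : EuclideanSpace ℝ (Fin d)), κm * ‖w‖ ^ 2 ≤ ⟪K s w, w⟫)
    (hKupper : ∀ (s : ℝ) (w : EuclideanSpace ℝ (Fin d)), ⟪K s w, w⟫ ≤ κM * ‖w‖ ^ 2)
    (hKinv : ∀ (s : ℝ) (w : EuclideanSpace ℝ (Fin d)),
      Kinv s (K s w) = w ∧ K s (Kinv s w) = w)
    (hM : ∀ s : ℝ, HasDerivAt (fun t : ℝ => K (θ t)) (M s) s)
    -- time step, source term, gravity direction, L-scheme parameter
    (τ : ℝ) (hτ : 0 < τ)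
    (f : EuclideanSpace ℝ (Fin d) → ℝ)
    (e : EuclideanSpace ℝ (Fin d))
    (L : ℝ) (hL : 0 < L)
    -- iterates and their gradients
    (ψprev ψim1 ψi ψt : EuclideanSpace ℝ (Fin d) → ℝ)
    (gψim1 gψi gψt : EuclideanSpace ℝ (Fin d) → EuclideanSpace ℝ (Fin d))
    (hgψim1 : ∀ x ∈ Ω, HasGradientAt ψim1 (gψim1 x) x)
    (hgψi : ∀ x ∈ Ω, HasGradientAt ψi (gψi x) x)
    (hgψt : ∀ x ∈ Ω, HasGradientAt ψt (gψt x) x)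
    (δ : EuclideanSpace ℝ (Fin d) → ℝ)
    (hδ : δ = fun x => ψt x - ψi x)
    (gδ : EuclideanSpace ℝ (Fin d) → EuclideanSpace ℝ (Fin d))
    (hgδ : gδ = fun x => gψt x - gψi x)
    -- (i) L-scheme identity at step `i` tested against `δ`
    (hLscheme :
      (∫ x in Ω, L * (ψi x - ψim1 x) * δ x)
        + τ * ∫ x in Ω, ⟪K (θ (ψim1 x)) (gψi x + e), gδ x⟫
      = τ * (∫ x in Ω, f x * δ x)
        - ∫ x in Ω, (θ (ψim1 x) - θ (ψprev x)) * δ x)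
    -- (ii) Newton identity at step `i+1` (iterates `ψ_i`, `ψ̃_{i+1}`) tested against `δ`
    (hNewton :
      (∫ x in Ω, θ' (ψi x) * (ψt x - ψi x) * δ x)
        + τ * (∫ x in Ω, ⟪K (θ (ψi x)) (gψt x + e), gδ x⟫)
        + τ * (∫ x in Ω, (ψt x - ψi x) * ⟪M (ψi x) (gψi x + e), gδ x⟫)
      = τ * (∫ x in Ω, f x * δ x)
        - ∫ x in Ω, (θ (ψi x) - θ (ψprev x)) * δ x)
    -- (iii) the convection term is not dominant
    (CN : ℝ) (hCN0 : 0 ≤ CN) (hCN2 : CN < 2)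
    (hconv : ∀ᵐ x ∂(volume.restrict Ω),
      τ * ⟪Kinv (θ (ψi x)) (M (ψi x) (gψi x + e)), M (ψi x) (gψi x + e)⟫
        ≤ CN ^ 2 * θ' (ψi x))
    -- (iv) degenerate region
    (D : Set (EuclideanSpace ℝ (Fin d))) (hD : MeasurableSet D) (hDΩ : D ⊆ Ω)
    (hθ'pos : ∀ᵐ x ∂(volume.restrict (Ω \ D)), 0 < θ' (ψi x))
    -- (v) equilibrated-flux identity
    (σ : EuclideanSpace ℝ (Fin d) → EuclideanSpace ℝ (Fin d))
    (hσ : (∫ x in Ω, ⟪σ x, gδ x⟫)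
      = -(1 / τ) * ∫ x in D,
          (L * (ψi x - ψim1 x) - (θ (ψi x) - θ (ψim1 x))) * δ x)
    -- integrability of all integrands appearing
    (hI1 : IntegrableOn (fun x => L * (ψi x - ψim1 x) * δ x) Ω)
    (hI2 : IntegrableOn (fun x => ⟪K (θ (ψim1 x)) (gψi x + e), gδ x⟫) Ω)
    (hI3 : IntegrableOn (fun x => f x * δ x) Ω)
    (hI4 : IntegrableOn (fun x => (θ (ψim1 x) - θ (ψprev x)) * δ x) Ω)
    (hI5 : IntegrableOn (fun x => θ' (ψi x) * (ψt x - ψi x) * δ x) Ω)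
    (hI6 : IntegrableOn (fun x => ⟪K (θ (ψi x)) (gψt x + e), gδ x⟫) Ω)
    (hI7 : IntegrableOn (fun x => (ψt x - ψi x) * ⟪M (ψi x) (gψi x + e), gδ x⟫) Ω)
    (hI8 : IntegrableOn (fun x => (θ (ψi x) - θ (ψprev x)) * δ x) Ω)
    (hI9 : IntegrableOn (fun x => ⟪σ x, gδ x⟫) Ω)
    (hI10 : IntegrableOn
      (fun x => (L * (ψi x - ψim1 x) - (θ (ψi x) - θ (ψim1 x))) * δ x) D)
    (hI11 : IntegrableOn
      (fun x => θ' (ψi x) * δ x ^ 2 + τ * ⟪K (θ (ψi x)) (gδ x), gδ x⟫) Ω)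
    (hI12 : IntegrableOn
      (fun x => (L * (ψi x - ψim1 x) - (θ (ψi x) - θ (ψim1 x))) ^ 2 / θ' (ψi x))
      (Ω \ D))
    (hI13 : IntegrableOn
      (fun x => ⟪Kinv (θ (ψi x))
            ((K (θ (ψi x)) - K (θ (ψim1 x))) (gψi x + e) + σ x),
          (K (θ (ψi x)) - K (θ (ψim1 x))) (gψi x + e) + σ x⟫) Ω) :
    Real.sqrt (∫ x in Ω,
        (θ' (ψi x) * δ x ^ 2 + τ * ⟪K (θ (ψi x)) (gδ x), gδ x⟫))
      ≤ (2 / (2 - CN)) * Real.sqrt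
          ((∫ x in Ω \ D,
              (L * (ψi x - ψim1 x) - (θ (ψi x) - θ (ψim1 x))) ^ 2 / θ' (ψi x))
            + τ * ∫ x in Ω,
                ⟪Kinv (θ (ψi x))
                    ((K (θ (ψi x)) - K (θ (ψim1 x))) (gψi x + e) + σ x),
                  (K (θ (ψi x)) - K (θ (ψim1 x))) (gψi x + e) + σ x⟫) :=
  Lscheme_to_Newton_switching_error_control_general d Ω θ θ' hθ'nonneg K Kinv M κm hκm hKsymm
    hKlower hKinv τ hτ f e L ψprev ψim1 ψi ψt gψi gψt δ hδ gδ hgδ hLscheme hNewton CN hCN0 hCN2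
    hconv D hD hDΩ hθ'pos σ hσ hI1 hI2 hI4 hI5 hI6 hI8 hI9 hI11 hI12 hI13
end

section
/- Error control of the Newton to Newton step (Proposition 3.2). Suppose: (i) the Newton identity holds at step i (iterates ψ_{i-1}, ψ_i, previous time-step solution ψ_prev) tested against δ := ψ_{i+1} − ψ_i; (ii) the Newton identity holds at step i+1 (iterates ψ_i, ψ_{i+1}, same ψ_prev) tested against δ; (iii) there is a constant C_N ∈ [0,2) such that τ·|K(θ(ψ_i(x)))^{-1/2} M(ψ_i(x))(∇ψ_i(x)+e)|² ≤ C_N²·θ'(ψ_i(x)) for a.e. x ∈ Ω; (iv) D ⊆ Ω is a measurable set (the degenerate region) with θ'(ψ_i(x)) > 0 for a.e. x ∈ Ω\D; (v) σ : Ω → ℝ^d satisfies the equilibrated-flux identity ∫_Ω ⟨σ, ∇δ⟩ = −(1/τ) ∫_D (θ'(ψ_{i-1})(ψ_i−ψ_{i-1}) − (θ(ψ_i)−θ(ψ_{i-1})))·δ. Then ‖δ‖_{N,ψ_i} ≤ (2/(2−C_N))·(η_poten² + τ·η_flux²)^{1/2}, where η_poten² := ∫_{Ω\D} (θ'(ψ_{i-1})(ψ_i−ψ_{i-1})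 − (θ(ψ_i)−θ(ψ_{i-1})))² / θ'(ψ_i) and η_flux² := ∫_Ω |K(θ(ψ_i))^{-1/2}[(K(θ(ψ_i)) − K(θ(ψ_{i-1})))(∇ψ_i + e) − M(ψ_{i-1})(ψ_i−ψ_{i-1})(∇ψ_{i-1} + e) + σ]|². -/
open MeasureTheory
open scoped RealInnerProductSpace

private lemma sq_le_imp {x y : ℝ} (hy : 0 ≤ y) (h : x ^ 2 ≤ y ^ 2) : x ≤ y := by
  nlinarith [sq_nonneg (x - y), sq_nonneg (x + y)]


private lemma pt1 {τ CN θx t P Q G : ℝ} (hτ : 0 < τ) (hCN0 : 0 ≤ CN) (hθx : 0 ≤ θx)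
    (hQ : 0 ≤ Q) (hG : 0 ≤ G) (hcs : P ^ 2 ≤ Q * G) (hx : τ * Q ≤ CN ^ 2 * θx) :
    |τ * (t * P)| ≤ CN / 2 * (θx * t ^ 2 + τ * G) := by
  have key2 : (τ * (t * P)) ^ 2 ≤ CN ^ 2 * ((θx * t ^ 2) * (τ * G)) := by
    nlinarith [mul_le_mul_of_nonneg_left hcs (sq_nonneg (τ * t)),
      mul_le_mul_of_nonneg_left
        (mul_le_mul_of_nonneg_right hx (mul_nonneg hτ.le hG)) (sq_nonneg t)]
  have key3 : (τ * (t * P)) ^ 2 ≤ (CN / 2 * (θx * t ^ 2 + τ * G)) ^ 2 := by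
    nlinarith [key2, sq_nonneg (CN * (θx * t ^ 2 - τ * G))]
  exact sq_le_imp
    (mul_nonneg (by linarith) (add_nonneg (mul_nonneg hθx (sq_nonneg t))
      (mul_nonneg hτ.le hG)))
    (by rw [sq_abs]; exact key3)

private lemma pt2 {l a ρ t : ℝ} (hl : 0 < l) (ha : 0 < a) :
    |ρ * t| ≤ 1 / (2 * l) * (ρ ^ 2 / a) + l / 2 * (a * t ^ 2) := by
  have hkey : 2 * l * a * |ρ * t| ≤ ρ ^ 2 + l ^ 2 * a ^ 2 * t ^ 2 := by
    have h1 : |2 * l * a * (ρ * t)| ≤ ρ ^ 2 + l ^ 2 * a ^ 2 * t ^ 2 :=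
      abs_le.mpr ⟨by nlinarith [sq_nonneg (l * a * t + ρ)],
        by nlinarith [sq_nonneg (l * a * t - ρ)]⟩
    calc 2 * l * a * |ρ * t| = |2 * l * a * (ρ * t)| := by
          rw [abs_mul (2 * l * a), abs_of_pos (by positivity : (0:ℝ) < 2 * l * a)]
      _ ≤ _ := h1
  have h2 : 1 / (2 * l) * (ρ ^ 2 / a) + l / 2 * (a * t ^ 2)
      = (ρ ^ 2 + l ^ 2 * a ^ 2 * t ^ 2) / (2 * l * a) := by
    field_simp
  rw [h2, le_div_iff₀ (by positivity)]
  linarith [hkey]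

private lemma pt3 {l Q G X : ℝ} (hl : 0 < l) (hQ : 0 ≤ Q) (hG : 0 ≤ G)
    (hcs : X ^ 2 ≤ Q * G) : |X| ≤ 1 / (2 * l) * Q + l / 2 * G := by
  have hkey : 2 * l * |X| ≤ Q + l ^ 2 * G := by
    refine sq_le_imp (add_nonneg hQ (mul_nonneg (sq_nonneg l) hG)) ?_
    nlinarith [mul_le_mul_of_nonneg_left hcs (by positivity : (0:ℝ) ≤ 4 * l ^ 2),
      sq_nonneg (Q - l ^ 2 * G), sq_abs X]
  have h2 : 1 / (2 * l) * Q + l / 2 * G = (Q + l ^ 2 * G) / (2 * l) := by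
    field_simp
  rw [h2, le_div_iff₀ (by positivity)]
  linarith [hkey]

private lemma cs_aux {d : ℕ}
    (K Kinv : EuclideanSpace ℝ (Fin d) →L[ℝ] EuclideanSpace ℝ (Fin d))
    (hsymm : ∀ v w : EuclideanSpace ℝ (Fin d), ⟪K v, w⟫ = ⟪v, K w⟫)
    (hnn : ∀ w : EuclideanSpace ℝ (Fin d), 0 ≤ ⟪K w, w⟫)
    (hinv : ∀ w : EuclideanSpace ℝ (Fin d), K (Kinv w) = w)
    (u w : EuclideanSpace ℝ (Fin d)) :
    ⟪u, w⟫ ^ 2 ≤ ⟪Kinv u, u⟫ * ⟪K w, w⟫ := by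
  set a := Kinv u with ha
  have hu : K a = u := hinv u
  have key : ∀ t : ℝ, 0 ≤ ⟪K w, w⟫ * (t * t) + (2 * ⟪K a, w⟫) * t + ⟪K a, a⟫ := by
    intro t
    have h0 := hnn (a + t • w)
    have hc : ⟪K w, a⟫ = ⟪K a, w⟫ := by
      rw [hsymm w a, real_inner_comm]
    rw [map_add, K.map_smul, inner_add_left, inner_add_right, inner_add_right,
      real_inner_smul_left, real_inner_smul_right, real_inner_smul_left,
      real_inner_smul_right, hc] at h0
    nlinarith [h0]
  have hd2 := discrim_le_zero key
  rw [discrim] at hd2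
  have h1 : ⟪a, u⟫ = ⟪K a, a⟫ := by rw [← hu, real_inner_comm]
  have h2 : ⟪u, w⟫ = ⟪K a, w⟫ := by rw [← hu]
  rw [h1, h2]
  nlinarith [hd2]




open MeasureTheory
open scoped RealInnerProductSpace

set_option maxHeartbeats 1600000000 in
/-- **Error control of the Newton to Newton step** (Proposition 3.2). -/
theorem Newton_to_Newton_error_control
    (d : ℕ) (hd : 1 ≤ d)
    (Ω : Set (EuclideanSpace ℝ (Fin d))) (hΩ : MeasurableSet Ω)
    -- saturation function and its derivative
    (θ θ' : ℝ → ℝ)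
    (hθdiff : ∀ s : ℝ, HasDerivAt θ (θ' s) s)
    (hθ'nonneg : ∀ s : ℝ, 0 ≤ θ' s)
    -- permeability, its inverse, and the derivative of `s ↦ K(θ(s))`
    (K Kinv M : ℝ → EuclideanSpace ℝ (Fin d) →L[ℝ] EuclideanSpace ℝ (Fin d))
    (κm κM : ℝ) (hκm : 0 < κm) (hκmM : κm ≤ κM)
    (hKsymm : ∀ (s : ℝ) (v w : EuclideanSpace ℝ (Fin d)), ⟪K s v, w⟫ = ⟪v, K s w⟫)
    (hKlower : ∀ (s : ℝ) (w : EuclideanSpace ℝ (Fin d)), κm * ‖w‖ ^ 2 ≤ ⟪K s w, w⟫)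
    (hKupper : ∀ (s : ℝ) (w : EuclideanSpace ℝ (Fin d)), ⟪K s w, w⟫ ≤ κM * ‖w‖ ^ 2)
    (hKinv : ∀ (s : ℝ) (w : EuclideanSpace ℝ (Fin d)),
      Kinv s (K s w) = w ∧ K s (Kinv s w) = w)
    (hM : ∀ s : ℝ, HasDerivAt (fun t : ℝ => K (θ t)) (M s) s)
    -- time step, source term, gravity direction
    (τ : ℝ) (hτ : 0 < τ)
    (f : EuclideanSpace ℝ (Fin d) → ℝ)
    (e : EuclideanSpace ℝ (Fin d))
    -- iterates and their gradients
    (ψprev ψim1 ψi ψip1 : EuclideanSpace ℝ (Fin d) → ℝ)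
    (gψim1 gψi gψip1 : EuclideanSpace ℝ (Fin d) → EuclideanSpace ℝ (Fin d))
    (hgψim1 : ∀ x ∈ Ω, HasGradientAt ψim1 (gψim1 x) x)
    (hgψi : ∀ x ∈ Ω, HasGradientAt ψi (gψi x) x)
    (hgψip1 : ∀ x ∈ Ω, HasGradientAt ψip1 (gψip1 x) x)
    (δ : EuclideanSpace ℝ (Fin d) → ℝ)
    (hδ : δ = fun x => ψip1 x - ψi x)
    (gδ : EuclideanSpace ℝ (Fin d) → EuclideanSpace ℝ (Fin d))
    (hgδ : gδ = fun x => gψip1 x - gψi x)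
    -- (i) Newton identity at step `i` (iterates `ψ_{i-1}`, `ψ_i`) tested against `δ`
    (hNewtonI :
      (∫ x in Ω, θ' (ψim1 x) * (ψi x - ψim1 x) * δ x)
        + τ * (∫ x in Ω, ⟪K (θ (ψim1 x)) (gψi x + e), gδ x⟫)
        + τ * (∫ x in Ω, (ψi x - ψim1 x) * ⟪M (ψim1 x) (gψim1 x + e), gδ x⟫)
      = τ * (∫ x in Ω, f x * δ x)
        - ∫ x in Ω, (θ (ψim1 x) - θ (ψprev x)) * δ x)
    -- (ii) Newton identity at step `i+1` (iterates `ψ_i`, `ψ_{i+1}`) tested against `δ`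
    (hNewtonIp1 :
      (∫ x in Ω, θ' (ψi x) * (ψip1 x - ψi x) * δ x)
        + τ * (∫ x in Ω, ⟪K (θ (ψi x)) (gψip1 x + e), gδ x⟫)
        + τ * (∫ x in Ω, (ψip1 x - ψi x) * ⟪M (ψi x) (gψi x + e), gδ x⟫)
      = τ * (∫ x in Ω, f x * δ x)
        - ∫ x in Ω, (θ (ψi x) - θ (ψprev x)) * δ x)
    -- (iii) the convection term is not dominant
    (CN : ℝ) (hCN0 : 0 ≤ CN) (hCN2 : CN < 2)
    (hconv : ∀ᵐ x ∂(volume.restrict Ω),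
      τ * ⟪Kinv (θ (ψi x)) (M (ψi x) (gψi x + e)), M (ψi x) (gψi x + e)⟫
        ≤ CN ^ 2 * θ' (ψi x))
    -- (iv) degenerate region
    (D : Set (EuclideanSpace ℝ (Fin d))) (hD : MeasurableSet D) (hDΩ : D ⊆ Ω)
    (hθ'pos : ∀ᵐ x ∂(volume.restrict (Ω \ D)), 0 < θ' (ψi x))
    -- (v) equilibrated-flux identity
    (σ : EuclideanSpace ℝ (Fin d) → EuclideanSpace ℝ (Fin d))
    (hσ : (∫ x in Ω, ⟪σ x, gδ x⟫)
      = -(1 / τ) * ∫ x in D,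
          (θ' (ψim1 x) * (ψi x - ψim1 x) - (θ (ψi x) - θ (ψim1 x))) * δ x)
    -- integrability of all integrands appearing
    (hI1 : IntegrableOn (fun x => θ' (ψim1 x) * (ψi x - ψim1 x) * δ x) Ω)
    (hI2 : IntegrableOn (fun x => ⟪K (θ (ψim1 x)) (gψi x + e), gδ x⟫) Ω)
    (hI3 : IntegrableOn
      (fun x => (ψi x - ψim1 x) * ⟪M (ψim1 x) (gψim1 x + e), gδ x⟫) Ω)
    (hI4 : IntegrableOn (fun x => f x * δ x) Ω)
    (hI5 : IntegrableOn (fun x => (θ (ψim1 x) - θ (ψprev x)) * δ x) Ω)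
    (hI6 : IntegrableOn (fun x => θ' (ψi x) * (ψip1 x - ψi x) * δ x) Ω)
    (hI7 : IntegrableOn (fun x => ⟪K (θ (ψi x)) (gψip1 x + e), gδ x⟫) Ω)
    (hI8 : IntegrableOn
      (fun x => (ψip1 x - ψi x) * ⟪M (ψi x) (gψi x + e), gδ x⟫) Ω)
    (hI9 : IntegrableOn (fun x => (θ (ψi x) - θ (ψprev x)) * δ x) Ω)
    (hI10 : IntegrableOn (fun x => ⟪σ x, gδ x⟫) Ω)
    (hI11 : IntegrableOn
      (fun x => (θ' (ψim1 x) * (ψi x - ψim1 x) - (θ (ψi x) - θ (ψim1 x))) * δ x) D)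
    (hI12 : IntegrableOn
      (fun x => θ' (ψi x) * δ x ^ 2 + τ * ⟪K (θ (ψi x)) (gδ x), gδ x⟫) Ω)
    (hI13 : IntegrableOn
      (fun x => (θ' (ψim1 x) * (ψi x - ψim1 x) - (θ (ψi x) - θ (ψim1 x))) ^ 2
        / θ' (ψi x)) (Ω \ D))
    (hI14 : IntegrableOn
      (fun x => ⟪Kinv (θ (ψi x))
            ((K (θ (ψi x)) - K (θ (ψim1 x))) (gψi x + e)
              - (ψi x - ψim1 x) • (M (ψim1 x) (gψim1 x + e)) + σ x),
          (K (θ (ψi x)) - K (θ (ψim1 x))) (gψi x + e)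
            - (ψi x - ψim1 x) • (M (ψim1 x) (gψim1 x + e)) + σ x⟫) Ω) :
    Real.sqrt (∫ x in Ω,
        (θ' (ψi x) * δ x ^ 2 + τ * ⟪K (θ (ψi x)) (gδ x), gδ x⟫))
      ≤ (2 / (2 - CN)) * Real.sqrt
          ((∫ x in Ω \ D,
              (θ' (ψim1 x) * (ψi x - ψim1 x) - (θ (ψi x) - θ (ψim1 x))) ^ 2
                / θ' (ψi x))
            + τ * ∫ x in Ω,
                ⟪Kinv (θ (ψi x))
                    ((K (θ (ψi x)) - K (θ (ψim1 x))) (gψi x + e)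
                      - (ψi x - ψim1 x) • (M (ψim1 x) (gψim1 x + e)) + σ x),
                  (K (θ (ψi x)) - K (θ (ψim1 x))) (gψi x + e)
                    - (ψi x - ψim1 x) • (M (ψim1 x) (gψim1 x + e)) + σ x⟫) := by
  
  -- basic positivity facts
  have hKnn : ∀ (s : ℝ) (w : EuclideanSpace ℝ (Fin d)), 0 ≤ ⟪K s w, w⟫ := fun s w =>
    le_trans (mul_nonneg hκm.le (by positivity)) (hKlower s w)
  have hKinvnn : ∀ (s : ℝ) (u : EuclideanSpace ℝ (Fin d)), 0 ≤ ⟪Kinv s u, u⟫ := by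
    intro s u
    calc (0:ℝ) ≤ ⟪K s (Kinv s u), Kinv s u⟫ := hKnn s _
    _ = ⟪Kinv s u, K s (Kinv s u)⟫ := real_inner_comm _ _
    _ = ⟪Kinv s u, u⟫ := by rw [(hKinv s u).2]
  have hcs : ∀ (s : ℝ) (u w : EuclideanSpace ℝ (Fin d)),
      ⟪u, w⟫ ^ 2 ≤ ⟪Kinv s u, u⟫ * ⟪K s w, w⟫ := fun s =>
    cs_aux (K s) (Kinv s) (hKsymm s) (hKnn s) (fun w => (hKinv s w).2)
  have hδx : ∀ x, δ x = ψip1 x - ψi x := fun x => by rw [hδ]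
  have hgδx : ∀ x, gδ x = gψip1 x - gψi x := fun x => by rw [hgδ]
  -- function-level identities
  have hA1fun : (fun x => θ' (ψi x) * (ψip1 x - ψi x) * δ x)
      = fun x => θ' (ψi x) * δ x ^ 2 := by
    funext x; rw [hδx x]; ring
  have hA3fun : (fun x => (ψip1 x - ψi x) * ⟪M (ψi x) (gψi x + e), gδ x⟫)
      = fun x => δ x * ⟪M (ψi x) (gψi x + e), gδ x⟫ := by
    funext x; rw [hδx x]
  have hsplitK : (fun x => ⟪K (θ (ψi x)) (gψip1 x + e), gδ x⟫)
      = fun x => ⟪K (θ (ψi x)) (gδ x), gδ x⟫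
        + (⟪(K (θ (ψi x)) - K (θ (ψim1 x))) (gψi x + e), gδ x⟫
           + ⟪K (θ (ψim1 x)) (gψi x + e), gδ x⟫) := by
    funext x
    have h1 : gψip1 x + e = gδ x + (gψi x + e) := by rw [hgδx x]; abel
    rw [h1, map_add, inner_add_left, ContinuousLinearMap.sub_apply, inner_sub_left]
    ring
  have hRsplit : (fun x => ⟪(K (θ (ψi x)) - K (θ (ψim1 x))) (gψi x + e)
        - (ψi x - ψim1 x) • (M (ψim1 x) (gψim1 x + e)) + σ x, gδ x⟫)
      = fun x => ⟪(K (θ (ψi x)) - K (θ (ψim1 x))) (gψi x + e), gδ x⟫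
        - (ψi x - ψim1 x) * ⟪M (ψim1 x) (gψim1 x + e), gδ x⟫ + ⟪σ x, gδ x⟫ := by
    funext x
    rw [inner_add_left, inner_sub_left, real_inner_smul_left]
  have hρfun : (fun x => (θ' (ψim1 x) * (ψi x - ψim1 x) - (θ (ψi x) - θ (ψim1 x))) * δ x)
      = fun x => θ' (ψim1 x) * (ψi x - ψim1 x) * δ x
          - (θ (ψi x) - θ (ψprev x)) * δ x + (θ (ψim1 x) - θ (ψprev x)) * δ x := by
    funext x; ring
  -- integrability facts
  have hIF1 : IntegrableOn (fun x => θ' (ψi x) * δ x ^ 2) Ω := hA1fun ▸ hI6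
  have hIτF2 : IntegrableOn (fun x => τ * ⟪K (θ (ψi x)) (gδ x), gδ x⟫) Ω :=
    (hI12.sub hIF1).congr (Filter.Eventually.of_forall fun x => by
      simp only [Pi.sub_apply]; ring)
  have hIF2 : IntegrableOn (fun x => ⟪K (θ (ψi x)) (gδ x), gδ x⟫) Ω := by
    refine (hIτF2.const_mul τ⁻¹).congr (Filter.Eventually.of_forall fun x => ?_)
    show τ⁻¹ * (τ * ⟪K (θ (ψi x)) (gδ x), gδ x⟫) = ⟪K (θ (ψi x)) (gδ x), gδ x⟫
    rw [inv_mul_cancel_left₀ (ne_of_gt hτ)]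
  have hIC2 : IntegrableOn
      (fun x => ⟪(K (θ (ψi x)) - K (θ (ψim1 x))) (gψi x + e), gδ x⟫) Ω :=
    ((hI7.sub hIF2).sub hI2).congr (Filter.Eventually.of_forall fun x => by
      simp only [Pi.sub_apply]; linear_combination congrFun hsplitK x)
  have hIA3 : IntegrableOn (fun x => δ x * ⟪M (ψi x) (gψi x + e), gδ x⟫) Ω :=
    hA3fun ▸ hI8
  have hIFR : IntegrableOn (fun x => ⟪(K (θ (ψi x)) - K (θ (ψim1 x))) (gψi x + e)
      - (ψi x - ψim1 x) • (M (ψim1 x) (gψim1 x + e)) + σ x, gδ x⟫) Ω :=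
    ((hIC2.sub hI3).add hI10).congr (Filter.Eventually.of_forall fun x => by
      simp only [Pi.sub_apply, Pi.add_apply]
      linear_combination (congrFun hRsplit x).symm)
  have hIρ : IntegrableOn
      (fun x => (θ' (ψim1 x) * (ψi x - ψim1 x) - (θ (ψi x) - θ (ψim1 x))) * δ x) Ω :=
    ((hI1.sub hI9).add hI5).congr (Filter.Eventually.of_forall fun x => by
      simp only [Pi.sub_apply, Pi.add_apply]; ring)
  -- rewrite the Newton identity at step i+1 in split form
  rw [hA1fun, hA3fun, hsplitK] at hNewtonIp1
  have hIC2B2 : IntegrableOn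
      (fun x => ⟪(K (θ (ψi x)) - K (θ (ψim1 x))) (gψi x + e), gδ x⟫
        + ⟪K (θ (ψim1 x)) (gψi x + e), gδ x⟫) Ω := hIC2.add hI2
  rw [integral_add hIF2 hIC2B2, integral_add hIC2 hI2] at hNewtonIp1
  -- split the flux remainder integral
  have hIC2mB3 : IntegrableOn
      (fun x => ⟪(K (θ (ψi x)) - K (θ (ψim1 x))) (gψi x + e), gδ x⟫
        - (ψi x - ψim1 x) * ⟪M (ψim1 x) (gψim1 x + e), gδ x⟫) Ω := hIC2.sub hI3
  have E3 : (∫ x in Ω, ⟪(K (θ (ψi x)) - K (θ (ψim1 x))) (gψi x + e)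
        - (ψi x - ψim1 x) • (M (ψim1 x) (gψim1 x + e)) + σ x, gδ x⟫)
      = (∫ x in Ω, ⟪(K (θ (ψi x)) - K (θ (ψim1 x))) (gψi x + e), gδ x⟫)
        - (∫ x in Ω, (ψi x - ψim1 x) * ⟪M (ψim1 x) (gψim1 x + e), gδ x⟫)
        + ∫ x in Ω, ⟪σ x, gδ x⟫ := by
    rw [hRsplit, integral_add hIC2mB3 hI10, integral_sub hIC2 hI3]
  have E4' : τ * (∫ x in Ω, ⟪σ x, gδ x⟫)
      = -∫ x in D, (θ' (ψim1 x) * (ψi x - ψim1 x) - (θ (ψi x) - θ (ψim1 x))) * δ x := by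
    rw [hσ]; field_simp
  have hIB1mA5 : IntegrableOn
      (fun x => θ' (ψim1 x) * (ψi x - ψim1 x) * δ x
        - (θ (ψi x) - θ (ψprev x)) * δ x) Ω := hI1.sub hI9
  have E5 : (∫ x in Ω, (θ' (ψim1 x) * (ψi x - ψim1 x) - (θ (ψi x) - θ (ψim1 x))) * δ x)
      = (∫ x in Ω, θ' (ψim1 x) * (ψi x - ψim1 x) * δ x)
        - (∫ x in Ω, (θ (ψi x) - θ (ψprev x)) * δ x)
        + ∫ x in Ω, (θ (ψim1 x) - θ (ψprev x)) * δ x := by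
    rw [hρfun, integral_add hIB1mA5 hI5, integral_sub hI1 hI9]
  have E6 : (∫ x in Ω, (θ' (ψim1 x) * (ψi x - ψim1 x) - (θ (ψi x) - θ (ψim1 x))) * δ x)
      = (∫ x in Ω \ D, (θ' (ψim1 x) * (ψi x - ψim1 x) - (θ (ψi x) - θ (ψim1 x))) * δ x)
        + ∫ x in D, (θ' (ψim1 x) * (ψi x - ψim1 x) - (θ (ψi x) - θ (ψim1 x))) * δ x := by
    have h := setIntegral_union (disjoint_sdiff_self_left) hD
      (hIρ.mono_set Set.diff_subset) hI11
    rwa [Set.diff_union_of_subset hDΩ] at h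
  -- the main identity:  ‖δ‖²_N = -τ∫δ⟨Mv,∇δ⟩ - τ∫⟨R,∇δ⟩ + ∫_{Ω\D} ρδ
  have eqmain : (∫ x in Ω, θ' (ψi x) * δ x ^ 2)
        + τ * (∫ x in Ω, ⟪K (θ (ψi x)) (gδ x), gδ x⟫)
      = -(τ * (∫ x in Ω, δ x * ⟪M (ψi x) (gψi x + e), gδ x⟫))
        - τ * (∫ x in Ω, ⟪(K (θ (ψi x)) - K (θ (ψim1 x))) (gψi x + e)
            - (ψi x - ψim1 x) • (M (ψim1 x) (gψim1 x + e)) + σ x, gδ x⟫)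
        + ∫ x in Ω \ D, (θ' (ψim1 x) * (ψi x - ψim1 x) - (θ (ψi x) - θ (ψim1 x))) * δ x := by
    linear_combination hNewtonIp1 - hNewtonI + τ * E3 + E4' - E5 + E6
  have hNgoal : (∫ x in Ω, (θ' (ψi x) * δ x ^ 2 + τ * ⟪K (θ (ψi x)) (gδ x), gδ x⟫))
      = (∫ x in Ω, θ' (ψi x) * δ x ^ 2)
        + τ * ∫ x in Ω, ⟪K (θ (ψi x)) (gδ x), gδ x⟫ := by
    rw [integral_add hIF1 hIτF2, integral_const_mul]
  -- nonnegativity of the various integrals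
  have hA1nn : 0 ≤ ∫ x in Ω, θ' (ψi x) * δ x ^ 2 :=
    setIntegral_nonneg hΩ fun x _ => mul_nonneg (hθ'nonneg _) (sq_nonneg _)
  have hC1nn : 0 ≤ ∫ x in Ω, ⟪K (θ (ψi x)) (gδ x), gδ x⟫ :=
    setIntegral_nonneg hΩ fun x _ => hKnn _ _
  have hEpnn : 0 ≤ ∫ x in Ω \ D,
      (θ' (ψim1 x) * (ψi x - ψim1 x) - (θ (ψi x) - θ (ψim1 x))) ^ 2 / θ' (ψi x) :=
    setIntegral_nonneg (hΩ.diff hD) fun x _ => div_nonneg (sq_nonneg _) (hθ'nonneg _)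
  have hEfnn : 0 ≤ ∫ x in Ω,
      ⟪Kinv (θ (ψi x)) ((K (θ (ψi x)) - K (θ (ψim1 x))) (gψi x + e)
          - (ψi x - ψim1 x) • (M (ψim1 x) (gψim1 x + e)) + σ x),
        (K (θ (ψi x)) - K (θ (ψim1 x))) (gψi x + e)
          - (ψi x - ψim1 x) • (M (ψim1 x) (gψim1 x + e)) + σ x⟫ :=
    setIntegral_nonneg hΩ fun x _ => hKinvnn _ _
  -- bound 1 : convection term
  have hb1 : |τ * ∫ x in Ω, δ x * ⟪M (ψi x) (gψi x + e), gδ x⟫|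
      ≤ CN / 2 * ((∫ x in Ω, θ' (ψi x) * δ x ^ 2)
        + τ * ∫ x in Ω, ⟪K (θ (ψi x)) (gδ x), gδ x⟫) := by
    have hpt : ∀ᵐ x ∂(volume.restrict Ω),
        |τ * (δ x * ⟪M (ψi x) (gψi x + e), gδ x⟫)|
          ≤ CN / 2 * (θ' (ψi x) * δ x ^ 2 + τ * ⟪K (θ (ψi x)) (gδ x), gδ x⟫) := by
      filter_upwards [hconv] with x hx
      exact pt1 hτ hCN0 (hθ'nonneg _) (hKinvnn _ _) (hKnn _ _)
        (hcs (θ (ψi x)) _ _) hx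
    calc |τ * ∫ x in Ω, δ x * ⟪M (ψi x) (gψi x + e), gδ x⟫|
        = |∫ x in Ω, τ * (δ x * ⟪M (ψi x) (gψi x + e), gδ x⟫)| := by
          rw [integral_const_mul]
      _ ≤ ∫ x in Ω, |τ * (δ x * ⟪M (ψi x) (gψi x + e), gδ x⟫)| := by
          simpa only [Real.norm_eq_abs] using
            norm_integral_le_integral_norm (μ := volume.restrict Ω)
              (fun x => τ * (δ x * ⟪M (ψi x) (gψi x + e), gδ x⟫))
      _ ≤ ∫ x in Ω, CN / 2 * (θ' (ψi x) * δ x ^ 2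
            + τ * ⟪K (θ (ψi x)) (gδ x), gδ x⟫) :=
          integral_mono_ae ((hIA3.const_mul τ).abs) (hI12.const_mul (CN / 2)) hpt
      _ = CN / 2 * ((∫ x in Ω, θ' (ψi x) * δ x ^ 2)
            + τ * ∫ x in Ω, ⟪K (θ (ψi x)) (gδ x), gδ x⟫) := by
          rw [integral_const_mul, integral_add hIF1 hIτF2, integral_const_mul]
  -- key inequality, for every positive λ
  have key : ∀ l : ℝ, 0 < l →
      (2 - CN - l) * (l * ((∫ x in Ω, θ' (ψi x) * δ x ^ 2)
        + τ * ∫ x in Ω, ⟪K (θ (ψi x)) (gδ x), gδ x⟫))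
      ≤ (∫ x in Ω \ D,
          (θ' (ψim1 x) * (ψi x - ψim1 x) - (θ (ψi x) - θ (ψim1 x))) ^ 2 / θ' (ψi x))
        + τ * ∫ x in Ω,
            ⟪Kinv (θ (ψi x)) ((K (θ (ψi x)) - K (θ (ψim1 x))) (gψi x + e)
                - (ψi x - ψim1 x) • (M (ψim1 x) (gψim1 x + e)) + σ x),
              (K (θ (ψi x)) - K (θ (ψim1 x))) (gψi x + e)
                - (ψi x - ψim1 x) • (M (ψim1 x) (gψim1 x + e)) + σ x⟫ := by
    intro l hl
    -- bound 2 : potential estimator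
    have hb2 : |∫ x in Ω \ D,
          (θ' (ψim1 x) * (ψi x - ψim1 x) - (θ (ψi x) - θ (ψim1 x))) * δ x|
        ≤ 1 / (2 * l) * (∫ x in Ω \ D,
            (θ' (ψim1 x) * (ψi x - ψim1 x) - (θ (ψi x) - θ (ψim1 x))) ^ 2 / θ' (ψi x))
          + l / 2 * ∫ x in Ω, θ' (ψi x) * δ x ^ 2 := by
      have hpt : ∀ᵐ x ∂(volume.restrict (Ω \ D)),
          |(θ' (ψim1 x) * (ψi x - ψim1 x) - (θ (ψi x) - θ (ψim1 x))) * δ x|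
            ≤ 1 / (2 * l) * ((θ' (ψim1 x) * (ψi x - ψim1 x)
                - (θ (ψi x) - θ (ψim1 x))) ^ 2 / θ' (ψi x))
              + l / 2 * (θ' (ψi x) * δ x ^ 2) := by
        filter_upwards [hθ'pos] with x hx
        exact pt2 hl hx
      calc |∫ x in Ω \ D,
            (θ' (ψim1 x) * (ψi x - ψim1 x) - (θ (ψi x) - θ (ψim1 x))) * δ x|
          ≤ ∫ x in Ω \ D,
              |(θ' (ψim1 x) * (ψi x - ψim1 x) - (θ (ψi x) - θ (ψim1 x))) * δ x| := by
            simpa only [Real.norm_eq_abs] using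
              norm_integral_le_integral_norm (μ := volume.restrict (Ω \ D))
                (fun x => (θ' (ψim1 x) * (ψi x - ψim1 x) - (θ (ψi x) - θ (ψim1 x))) * δ x)
        _ ≤ ∫ x in Ω \ D, (1 / (2 * l) * ((θ' (ψim1 x) * (ψi x - ψim1 x)
              - (θ (ψi x) - θ (ψim1 x))) ^ 2 / θ' (ψi x))
              + l / 2 * (θ' (ψi x) * δ x ^ 2)) :=
            integral_mono_ae ((hIρ.mono_set Set.diff_subset).abs)
              ((hI13.const_mul (1 / (2 * l))).add
                ((hIF1.mono_set Set.diff_subset).const_mul (l / 2))) hpt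
        _ = 1 / (2 * l) * (∫ x in Ω \ D,
              (θ' (ψim1 x) * (ψi x - ψim1 x) - (θ (ψi x) - θ (ψim1 x))) ^ 2 / θ' (ψi x))
              + l / 2 * ∫ x in Ω \ D, θ' (ψi x) * δ x ^ 2 := by
            rw [integral_add (hI13.const_mul (1 / (2 * l)))
              ((hIF1.mono_set Set.diff_subset).const_mul (l / 2)),
              integral_const_mul, integral_const_mul]
        _ ≤ 1 / (2 * l) * (∫ x in Ω \ D,
              (θ' (ψim1 x) * (ψi x - ψim1 x) - (θ (ψi x) - θ (ψim1 x))) ^ 2 / θ' (ψi x))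
              + l / 2 * ∫ x in Ω, θ' (ψi x) * δ x ^ 2 := by
            have hmono : (∫ x in Ω \ D, θ' (ψi x) * δ x ^ 2)
                ≤ ∫ x in Ω, θ' (ψi x) * δ x ^ 2 :=
              setIntegral_mono_set hIF1
                (Filter.Eventually.of_forall fun x =>
                  mul_nonneg (hθ'nonneg _) (sq_nonneg _))
                (HasSubset.Subset.eventuallyLE Set.diff_subset)
            nlinarith [hmono, hl]
    -- bound 3 : flux estimator
    have hb3 : |τ * ∫ x in Ω, ⟪(K (θ (ψi x)) - K (θ (ψim1 x))) (gψi x + e)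
          - (ψi x - ψim1 x) • (M (ψim1 x) (gψim1 x + e)) + σ x, gδ x⟫|
        ≤ 1 / (2 * l) * (τ * ∫ x in Ω,
            ⟪Kinv (θ (ψi x)) ((K (θ (ψi x)) - K (θ (ψim1 x))) (gψi x + e)
                - (ψi x - ψim1 x) • (M (ψim1 x) (gψim1 x + e)) + σ x),
              (K (θ (ψi x)) - K (θ (ψim1 x))) (gψi x + e)
                - (ψi x - ψim1 x) • (M (ψim1 x) (gψim1 x + e)) + σ x⟫)
          + l / 2 * (τ * ∫ x in Ω, ⟪K (θ (ψi x)) (gδ x), gδ x⟫) := by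
      have hpt : ∀ᵐ x ∂(volume.restrict Ω),
          |⟪(K (θ (ψi x)) - K (θ (ψim1 x))) (gψi x + e)
              - (ψi x - ψim1 x) • (M (ψim1 x) (gψim1 x + e)) + σ x, gδ x⟫|
            ≤ 1 / (2 * l) * ⟪Kinv (θ (ψi x)) ((K (θ (ψi x)) - K (θ (ψim1 x))) (gψi x + e)
                  - (ψi x - ψim1 x) • (M (ψim1 x) (gψim1 x + e)) + σ x),
                (K (θ (ψi x)) - K (θ (ψim1 x))) (gψi x + e)
                  - (ψi x - ψim1 x) • (M (ψim1 x) (gψim1 x + e)) + σ x⟫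
              + l / 2 * ⟪K (θ (ψi x)) (gδ x), gδ x⟫ := by
        refine Filter.Eventually.of_forall fun x => ?_
        exact pt3 hl (hKinvnn _ _) (hKnn _ _) (hcs (θ (ψi x)) _ _)
      have h1 : |∫ x in Ω, ⟪(K (θ (ψi x)) - K (θ (ψim1 x))) (gψi x + e)
            - (ψi x - ψim1 x) • (M (ψim1 x) (gψim1 x + e)) + σ x, gδ x⟫|
          ≤ 1 / (2 * l) * (∫ x in Ω,
              ⟪Kinv (θ (ψi x)) ((K (θ (ψi x)) - K (θ (ψim1 x))) (gψi x + e)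
                  - (ψi x - ψim1 x) • (M (ψim1 x) (gψim1 x + e)) + σ x),
                (K (θ (ψi x)) - K (θ (ψim1 x))) (gψi x + e)
                  - (ψi x - ψim1 x) • (M (ψim1 x) (gψim1 x + e)) + σ x⟫)
            + l / 2 * ∫ x in Ω, ⟪K (θ (ψi x)) (gδ x), gδ x⟫ := by
        calc |∫ x in Ω, ⟪(K (θ (ψi x)) - K (θ (ψim1 x))) (gψi x + e)
              - (ψi x - ψim1 x) • (M (ψim1 x) (gψim1 x + e)) + σ x, gδ x⟫|
            ≤ ∫ x in Ω, |⟪(K (θ (ψi x)) - K (θ (ψim1 x))) (gψi x + e)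
                - (ψi x - ψim1 x) • (M (ψim1 x) (gψim1 x + e)) + σ x, gδ x⟫| := by
              simpa only [Real.norm_eq_abs] using
                norm_integral_le_integral_norm (μ := volume.restrict Ω)
                  (fun x => ⟪(K (θ (ψi x)) - K (θ (ψim1 x))) (gψi x + e)
                    - (ψi x - ψim1 x) • (M (ψim1 x) (gψim1 x + e)) + σ x, gδ x⟫)
          _ ≤ ∫ x in Ω, (1 / (2 * l)
                * ⟪Kinv (θ (ψi x)) ((K (θ (ψi x)) - K (θ (ψim1 x))) (gψi x + e)
                    - (ψi x - ψim1 x) • (M (ψim1 x) (gψim1 x + e)) + σ x),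
                  (K (θ (ψi x)) - K (θ (ψim1 x))) (gψi x + e)
                    - (ψi x - ψim1 x) • (M (ψim1 x) (gψim1 x + e)) + σ x⟫
                + l / 2 * ⟪K (θ (ψi x)) (gδ x), gδ x⟫) :=
              integral_mono_ae hIFR.abs
                ((hI14.const_mul (1 / (2 * l))).add (hIF2.const_mul (l / 2))) hpt
          _ = 1 / (2 * l) * (∫ x in Ω,
                ⟪Kinv (θ (ψi x)) ((K (θ (ψi x)) - K (θ (ψim1 x))) (gψi x + e)
                    - (ψi x - ψim1 x) • (M (ψim1 x) (gψim1 x + e)) + σ x),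
                  (K (θ (ψi x)) - K (θ (ψim1 x))) (gψi x + e)
                    - (ψi x - ψim1 x) • (M (ψim1 x) (gψim1 x + e)) + σ x⟫)
                + l / 2 * ∫ x in Ω, ⟪K (θ (ψi x)) (gδ x), gδ x⟫ := by
              rw [integral_add (hI14.const_mul (1 / (2 * l))) (hIF2.const_mul (l / 2)),
                integral_const_mul, integral_const_mul]
      rw [abs_mul, abs_of_pos hτ]
      nlinarith [mul_le_mul_of_nonneg_left h1 hτ.le]
    -- combine the three bounds with the main identity
    have htri : (∫ x in Ω, θ' (ψi x) * δ x ^ 2)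
        + τ * (∫ x in Ω, ⟪K (θ (ψi x)) (gδ x), gδ x⟫)
        ≤ |τ * ∫ x in Ω, δ x * ⟪M (ψi x) (gψi x + e), gδ x⟫|
          + |τ * ∫ x in Ω, ⟪(K (θ (ψi x)) - K (θ (ψim1 x))) (gψi x + e)
              - (ψi x - ψim1 x) • (M (ψim1 x) (gψim1 x + e)) + σ x, gδ x⟫|
          + |∫ x in Ω \ D,
              (θ' (ψim1 x) * (ψi x - ψim1 x) - (θ (ψi x) - θ (ψim1 x))) * δ x| := by
      rw [eqmain]
      have n1 := neg_abs_le (τ * ∫ x in Ω, δ x * ⟪M (ψi x) (gψi x + e), gδ x⟫)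
      have n2 := neg_abs_le (τ * ∫ x in Ω, ⟪(K (θ (ψi x)) - K (θ (ψim1 x))) (gψi x + e)
          - (ψi x - ψim1 x) • (M (ψim1 x) (gψim1 x + e)) + σ x, gδ x⟫)
      have n3 := le_abs_self (∫ x in Ω \ D,
          (θ' (ψim1 x) * (ψi x - ψim1 x) - (θ (ψi x) - θ (ψim1 x))) * δ x)
      linarith
    have hstep : (1 - CN / 2 - l / 2) * ((∫ x in Ω, θ' (ψi x) * δ x ^ 2)
          + τ * ∫ x in Ω, ⟪K (θ (ψi x)) (gδ x), gδ x⟫)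
        ≤ 1 / (2 * l) * ((∫ x in Ω \ D,
            (θ' (ψim1 x) * (ψi x - ψim1 x) - (θ (ψi x) - θ (ψim1 x))) ^ 2 / θ' (ψi x))
          + τ * ∫ x in Ω,
              ⟪Kinv (θ (ψi x)) ((K (θ (ψi x)) - K (θ (ψim1 x))) (gψi x + e)
                  - (ψi x - ψim1 x) • (M (ψim1 x) (gψim1 x + e)) + σ x),
                (K (θ (ψi x)) - K (θ (ψim1 x))) (gψi x + e)
                  - (ψi x - ψim1 x) • (M (ψim1 x) (gψim1 x + e)) + σ x⟫) := by
      linarith [hb1, hb2, hb3, htri]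
    have h2l : (0:ℝ) < 2 * l := by linarith
    have hfin := mul_le_mul_of_nonneg_left hstep h2l.le
    have hr : (2 * l) * (1 / (2 * l) * ((∫ x in Ω \ D,
          (θ' (ψim1 x) * (ψi x - ψim1 x) - (θ (ψi x) - θ (ψim1 x))) ^ 2 / θ' (ψi x))
        + τ * ∫ x in Ω,
            ⟪Kinv (θ (ψi x)) ((K (θ (ψi x)) - K (θ (ψim1 x))) (gψi x + e)
                - (ψi x - ψim1 x) • (M (ψim1 x) (gψim1 x + e)) + σ x),
              (K (θ (ψi x)) - K (θ (ψim1 x))) (gψi x + e)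
                - (ψi x - ψim1 x) • (M (ψim1 x) (gψim1 x + e)) + σ x⟫))
        = (∫ x in Ω \ D,
            (θ' (ψim1 x) * (ψi x - ψim1 x) - (θ (ψi x) - θ (ψim1 x))) ^ 2 / θ' (ψi x))
          + τ * ∫ x in Ω,
              ⟪Kinv (θ (ψi x)) ((K (θ (ψi x)) - K (θ (ψim1 x))) (gψi x + e)
                  - (ψi x - ψim1 x) • (M (ψim1 x) (gψim1 x + e)) + σ x),
                (K (θ (ψi x)) - K (θ (ψim1 x))) (gψi x + e)
                  - (ψi x - ψim1 x) • (M (ψim1 x) (gψim1 x + e)) + σ x⟫ := by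
      field_simp
    linarith [hfin, hr]
  -- conclusion
  rw [hNgoal]
  have hN2 : 0 ≤ (∫ x in Ω, θ' (ψi x) * δ x ^ 2)
      + τ * ∫ x in Ω, ⟪K (θ (ψi x)) (gδ x), gδ x⟫ :=
    add_nonneg hA1nn (mul_nonneg hτ.le hC1nn)
  have hE : 0 ≤ (∫ x in Ω \ D,
        (θ' (ψim1 x) * (ψi x - ψim1 x) - (θ (ψi x) - θ (ψim1 x))) ^ 2 / θ' (ψi x))
      + τ * ∫ x in Ω,
          ⟪Kinv (θ (ψi x)) ((K (θ (ψi x)) - K (θ (ψim1 x))) (gψi x + e)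
              - (ψi x - ψim1 x) • (M (ψim1 x) (gψim1 x + e)) + σ x),
            (K (θ (ψi x)) - K (θ (ψim1 x))) (gψi x + e)
              - (ψi x - ψim1 x) • (M (ψim1 x) (gψim1 x + e)) + σ x⟫ :=
    add_nonneg hEpnn (mul_nonneg hτ.le hEfnn)
  have h2CN : (0:ℝ) < 2 - CN := by linarith
  rcases eq_or_lt_of_le hN2 with h0 | hposN
  · rw [← h0, Real.sqrt_zero]
    exact mul_nonneg (div_nonneg (by norm_num) h2CN.le) (Real.sqrt_nonneg _)
  · rcases eq_or_lt_of_le hE with hE0 | hEpos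
    · exfalso
      have hk := key ((2 - CN) / 2) (by linarith)
      have hprod := mul_pos h2CN (mul_pos h2CN hposN)
      nlinarith [hk, hprod, hE0]
    · set n := Real.sqrt ((∫ x in Ω, θ' (ψi x) * δ x ^ 2)
        + τ * ∫ x in Ω, ⟪K (θ (ψi x)) (gδ x), gδ x⟫) with hn
      set s := Real.sqrt ((∫ x in Ω \ D,
          (θ' (ψim1 x) * (ψi x - ψim1 x) - (θ (ψi x) - θ (ψim1 x))) ^ 2 / θ' (ψi x))
        + τ * ∫ x in Ω,
            ⟪Kinv (θ (ψi x)) ((K (θ (ψi x)) - K (θ (ψim1 x))) (gψi x + e)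
                - (ψi x - ψim1 x) • (M (ψim1 x) (gψim1 x + e)) + σ x),
              (K (θ (ψi x)) - K (θ (ψim1 x))) (gψi x + e)
                - (ψi x - ψim1 x) • (M (ψim1 x) (gψim1 x + e)) + σ x⟫) with hs
      have hspos : 0 < s := Real.sqrt_pos.mpr hEpos
      have hnpos : 0 < n := Real.sqrt_pos.mpr hposN
      have hs2 : s ^ 2 = (∫ x in Ω \ D,
          (θ' (ψim1 x) * (ψi x - ψim1 x) - (θ (ψi x) - θ (ψim1 x))) ^ 2 / θ' (ψi x))
        + τ * ∫ x in Ω,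
            ⟪Kinv (θ (ψi x)) ((K (θ (ψi x)) - K (θ (ψim1 x))) (gψi x + e)
                - (ψi x - ψim1 x) • (M (ψim1 x) (gψim1 x + e)) + σ x),
              (K (θ (ψi x)) - K (θ (ψim1 x))) (gψi x + e)
                - (ψi x - ψim1 x) • (M (ψim1 x) (gψim1 x + e)) + σ x⟫ :=
        Real.sq_sqrt hE
      have hn2 : n ^ 2 = (∫ x in Ω, θ' (ψi x) * δ x ^ 2)
          + τ * ∫ x in Ω, ⟪K (θ (ψi x)) (gδ x), gδ x⟫ :=
        Real.sq_sqrt hN2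
      have hk := key (s / n) (div_pos hspos hnpos)
      rw [← hs2, ← hn2] at hk
      have hexp : (2 - CN - s / n) * (s / n * n ^ 2) = (2 - CN) * s * n - s ^ 2 := by
        field_simp
      rw [hexp] at hk
      rw [div_mul_eq_mul_div, le_div_iff₀ h2CN]
      exact le_of_mul_le_mul_right (by nlinarith [hk]) hspos
end

section
/- Error control of the L-scheme (Proposition B.1). Suppose: (i) the L-scheme identity with parameter L > 0 holds at step i (iterates ψ_{i-1}, ψ_i, previous time-step solution ψ_prev) tested against δ := ψ_{i+1} − ψ_i; (ii) the L-scheme identity with the same L holds at step i+1 (iterates ψ_i, ψ_{i+1}, same ψ_prev) tested against δ. Then ‖δ‖_{L,ψ_i} ≤ (η_poten² + τ·η_flux²)^{1/2}, where η_poten² := (1/L)·∫_Ω (L(ψ_i−ψ_{i-1}) − (θ(ψ_i)−θ(ψ_{i-1})))² and η_flux² := ∫_Ω |K(θ(ψ_i))^{-1/2}(K(θ(ψ_i)) − K(θ(ψ_{i-1})))(∇ψ_i + e)|². -/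
open MeasureTheory
open scoped RealInnerProductSpace

set_option maxHeartbeats 1000000 in
/-- **Error control of the L-scheme** (Proposition B.1).
Given the L-scheme identities with parameter `L > 0` at steps `i` and `i+1`
(both tested against `δ := ψ_{i+1} − ψ_i`), one has
`‖δ‖_{L,ψ_i} ≤ (η_poten² + τ·η_flux²)^{1/2}` with
`η_poten² = (1/L)·∫_Ω (L(ψ_i−ψ_{i-1}) − (θ(ψ_i)−θ(ψ_{i-1})))²` and
`η_flux² = ∫_Ω |K(θ(ψ_i))^{-1/2}(K(θ(ψ_i)) − K(θ(ψ_{i-1})))(∇ψ_i + e)|²`. -/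
theorem Lscheme_error_control
    (d : ℕ) (hd : 1 ≤ d)
    (Ω : Set (EuclideanSpace ℝ (Fin d))) (hΩ : MeasurableSet Ω)
    -- saturation function
    (θ : ℝ → ℝ)
    -- permeability and its inverse
    (K Kinv : ℝ → EuclideanSpace ℝ (Fin d) →L[ℝ] EuclideanSpace ℝ (Fin d))
    (κm κM : ℝ) (hκm : 0 < κm) (hκmM : κm ≤ κM)
    (hKsymm : ∀ (s : ℝ) (v w : EuclideanSpace ℝ (Fin d)), ⟪K s v, w⟫ = ⟪v, K s w⟫)
    (hKlower : ∀ (s : ℝ) (w : EuclideanSpace ℝ (Fin d)), κm * ‖w‖ ^ 2 ≤ ⟪K s w, w⟫)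
    (hKupper : ∀ (s : ℝ) (w : EuclideanSpace ℝ (Fin d)), ⟪K s w, w⟫ ≤ κM * ‖w‖ ^ 2)
    (hKinv : ∀ (s : ℝ) (w : EuclideanSpace ℝ (Fin d)),
      Kinv s (K s w) = w ∧ K s (Kinv s w) = w)
    -- time step, source term, gravity direction, L-scheme parameter
    (τ : ℝ) (hτ : 0 < τ)
    (f : EuclideanSpace ℝ (Fin d) → ℝ)
    (e : EuclideanSpace ℝ (Fin d))
    (L : ℝ) (hL : 0 < L)
    -- iterates and their gradients
    (ψprev ψim1 ψi ψip1 : EuclideanSpace ℝ (Fin d) → ℝ)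
    (gψim1 gψi gψip1 : EuclideanSpace ℝ (Fin d) → EuclideanSpace ℝ (Fin d))
    (hgψim1 : ∀ x ∈ Ω, HasGradientAt ψim1 (gψim1 x) x)
    (hgψi : ∀ x ∈ Ω, HasGradientAt ψi (gψi x) x)
    (hgψip1 : ∀ x ∈ Ω, HasGradientAt ψip1 (gψip1 x) x)
    (δ : EuclideanSpace ℝ (Fin d) → ℝ)
    (hδ : δ = fun x => ψip1 x - ψi x)
    (gδ : EuclideanSpace ℝ (Fin d) → EuclideanSpace ℝ (Fin d))
    (hgδ : gδ = fun x => gψip1 x - gψi x)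
    -- (i) L-scheme identity at step `i` (iterates `ψ_{i-1}`, `ψ_i`) tested against `δ`
    (hLschemeI :
      (∫ x in Ω, L * (ψi x - ψim1 x) * δ x)
        + τ * ∫ x in Ω, ⟪K (θ (ψim1 x)) (gψi x + e), gδ x⟫
      = τ * (∫ x in Ω, f x * δ x)
        - ∫ x in Ω, (θ (ψim1 x) - θ (ψprev x)) * δ x)
    -- (ii) L-scheme identity at step `i+1` (iterates `ψ_i`, `ψ_{i+1}`) tested against `δ`
    (hLschemeIp1 :
      (∫ x in Ω, L * (ψip1 x - ψi x) * δ x)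
        + τ * ∫ x in Ω, ⟪K (θ (ψi x)) (gψip1 x + e), gδ x⟫
      = τ * (∫ x in Ω, f x * δ x)
        - ∫ x in Ω, (θ (ψi x) - θ (ψprev x)) * δ x)
    -- integrability of all integrands appearing
    (hI1 : IntegrableOn (fun x => L * (ψi x - ψim1 x) * δ x) Ω)
    (hI2 : IntegrableOn (fun x => ⟪K (θ (ψim1 x)) (gψi x + e), gδ x⟫) Ω)
    (hI3 : IntegrableOn (fun x => f x * δ x) Ω)
    (hI4 : IntegrableOn (fun x => (θ (ψim1 x) - θ (ψprev x)) * δ x) Ω)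
    (hI5 : IntegrableOn (fun x => L * (ψip1 x - ψi x) * δ x) Ω)
    (hI6 : IntegrableOn (fun x => ⟪K (θ (ψi x)) (gψip1 x + e), gδ x⟫) Ω)
    (hI7 : IntegrableOn (fun x => (θ (ψi x) - θ (ψprev x)) * δ x) Ω)
    (hI8 : IntegrableOn
      (fun x => L * δ x ^ 2 + τ * ⟪K (θ (ψi x)) (gδ x), gδ x⟫) Ω)
    (hI9 : IntegrableOn
      (fun x => (L * (ψi x - ψim1 x) - (θ (ψi x) - θ (ψim1 x))) ^ 2) Ω)
    (hI10 : IntegrableOn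
      (fun x => ⟪Kinv (θ (ψi x)) ((K (θ (ψi x)) - K (θ (ψim1 x))) (gψi x + e)),
          (K (θ (ψi x)) - K (θ (ψim1 x))) (gψi x + e)⟫) Ω) :
    Real.sqrt (∫ x in Ω, (L * δ x ^ 2 + τ * ⟪K (θ (ψi x)) (gδ x), gδ x⟫))
      ≤ Real.sqrt
          ((1 / L) * (∫ x in Ω,
              (L * (ψi x - ψim1 x) - (θ (ψi x) - θ (ψim1 x))) ^ 2)
            + τ * ∫ x in Ω,
                ⟪Kinv (θ (ψi x)) ((K (θ (ψi x)) - K (θ (ψim1 x))) (gψi x + e)),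
                  (K (θ (ψi x)) - K (θ (ψim1 x))) (gψi x + e)⟫) := by
  have hδx : ∀ x, δ x = ψip1 x - ψi x := fun x => by rw [hδ]
  have hgδx : ∀ x, gδ x = gψip1 x - gψi x := fun x => by rw [hgδ]
  have isub : ∀ {p q : EuclideanSpace ℝ (Fin d) → ℝ},
      IntegrableOn p Ω → IntegrableOn q Ω →
      IntegrableOn (fun x => p x - q x) Ω := fun hp hq => hp.sub hq
  -- integrability of the pieces
  have h_Lδ2 : IntegrableOn (fun x => L * δ x ^ 2) Ω := by
    have heq : (fun x => L * δ x ^ 2)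
        = fun x => L * (ψip1 x - ψi x) * δ x := by
      funext x; rw [hδx]; ring
    rw [heq]; exact hI5
  have h_Kgδτ : IntegrableOn (fun x => τ * ⟪K (θ (ψi x)) (gδ x), gδ x⟫) Ω := by
    have h := isub hI8 h_Lδ2
    have heq : (fun x => (L * δ x ^ 2 + τ * ⟪K (θ (ψi x)) (gδ x), gδ x⟫)
          - L * δ x ^ 2)
        = fun x => τ * ⟪K (θ (ψi x)) (gδ x), gδ x⟫ := by
      funext x; ring
    rwa [heq] at h
  have h_Kgδ : IntegrableOn (fun x => ⟪K (θ (ψi x)) (gδ x), gδ x⟫) Ω := by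
    have h := h_Kgδτ.const_mul τ⁻¹
    have heq : (fun x => τ⁻¹ * (τ * ⟪K (θ (ψi x)) (gδ x), gδ x⟫))
        = fun x => ⟪K (θ (ψi x)) (gδ x), gδ x⟫ := by
      funext x
      rw [← mul_assoc, inv_mul_cancel₀ (ne_of_gt hτ), one_mul]
    rwa [heq] at h
  have h_Kiw : IntegrableOn (fun x => ⟪K (θ (ψi x)) (gψi x + e), gδ x⟫) Ω := by
    have h := isub hI6 h_Kgδ
    have heq : (fun x => ⟪K (θ (ψi x)) (gψip1 x + e), gδ x⟫
          - ⟪K (θ (ψi x)) (gδ x), gδ x⟫)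
        = fun x => ⟪K (θ (ψi x)) (gψi x + e), gδ x⟫ := by
      funext x
      rw [hgδx]
      rw [show gψip1 x - gψi x = (gψip1 x + e) - (gψi x + e) by abel]
      simp only [map_sub, inner_sub_left, inner_sub_right]
      ring
    rwa [heq] at h
  have h_aδ : IntegrableOn (fun x => (L * (ψi x - ψim1 x) - (θ (ψi x) - θ (ψim1 x))) * δ x) Ω := by
    have h := isub hI1 (isub hI7 hI4)
    have heq : (fun x => L * (ψi x - ψim1 x) * δ x
          - ((θ (ψi x) - θ (ψprev x)) * δ x - (θ (ψim1 x) - θ (ψprev x)) * δ x))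
        = fun x => (L * (ψi x - ψim1 x) - (θ (ψi x) - θ (ψim1 x))) * δ x := by
      funext x; ring
    rwa [heq] at h
  have h_dkgδ : IntegrableOn (fun x => ⟪((K (θ (ψi x)) - K (θ (ψim1 x))) (gψi x + e)), gδ x⟫) Ω := by
    have h := isub h_Kiw hI2
    have heq : (fun x => ⟪K (θ (ψi x)) (gψi x + e), gδ x⟫
          - ⟪K (θ (ψim1 x)) (gψi x + e), gδ x⟫)
        = fun x => ⟪((K (θ (ψi x)) - K (θ (ψim1 x))) (gψi x + e)), gδ x⟫ := by
      funext x
      simp only [ContinuousLinearMap.sub_apply, inner_sub_left]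
    rwa [heq] at h
  -- integral identities from linearity
  have e_F : (∫ x in Ω, (L * δ x ^ 2 + τ * ⟪K (θ (ψi x)) (gδ x), gδ x⟫))
      = (∫ x in Ω, L * (ψip1 x - ψi x) * δ x)
        + τ * ∫ x in Ω, ⟪K (θ (ψi x)) (gδ x), gδ x⟫ := by
    rw [integral_add h_Lδ2 h_Kgδτ]
    congr 1
    · exact setIntegral_congr_fun hΩ (fun x _ => by rw [hδx]; ring)
    · exact integral_const_mul τ _
  have e_a : (∫ x in Ω, (L * (ψi x - ψim1 x) - (θ (ψi x) - θ (ψim1 x))) * δ x)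
      = (∫ x in Ω, L * (ψi x - ψim1 x) * δ x)
        - ((∫ x in Ω, (θ (ψi x) - θ (ψprev x)) * δ x)
          - ∫ x in Ω, (θ (ψim1 x) - θ (ψprev x)) * δ x) := by
    rw [← integral_sub hI7 hI4, ← integral_sub hI1 (isub hI7 hI4)]
    apply setIntegral_congr_fun hΩ
    intro x _
    ring
  have e_dk : (∫ x in Ω, ⟪((K (θ (ψi x)) - K (θ (ψim1 x))) (gψi x + e)), gδ x⟫)
      = (∫ x in Ω, ⟪K (θ (ψi x)) (gψi x + e), gδ x⟫)
        - ∫ x in Ω, ⟪K (θ (ψim1 x)) (gψi x + e), gδ x⟫ := by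
    rw [← integral_sub h_Kiw hI2]
    apply setIntegral_congr_fun hΩ
    intro x _
    simp only [ContinuousLinearMap.sub_apply, inner_sub_left]
  have e_Kg : (∫ x in Ω, ⟪K (θ (ψi x)) (gδ x), gδ x⟫)
      = (∫ x in Ω, ⟪K (θ (ψi x)) (gψip1 x + e), gδ x⟫)
        - ∫ x in Ω, ⟪K (θ (ψi x)) (gψi x + e), gδ x⟫ := by
    rw [← integral_sub hI6 h_Kiw]
    apply setIntegral_congr_fun hΩ
    intro x _
    simp only [hgδ]
    rw [show gψip1 x - gψi x = (gψip1 x + e) - (gψi x + e) by abel]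
    simp only [map_sub, inner_sub_left, inner_sub_right]
    ring
  -- the key error identity
  have key : (∫ x in Ω, (L * δ x ^ 2 + τ * ⟪K (θ (ψi x)) (gδ x), gδ x⟫))
      = (∫ x in Ω, (L * (ψi x - ψim1 x) - (θ (ψi x) - θ (ψim1 x))) * δ x) - τ * ∫ x in Ω, ⟪((K (θ (ψi x)) - K (θ (ψim1 x))) (gψi x + e)), gδ x⟫ := by
    rw [e_F, e_a, e_dk, e_Kg]
    nlinarith [hLschemeI, hLschemeIp1]
  -- pointwise bound
  have hpt : ∀ x ∈ Ω,
      (L * (ψi x - ψim1 x) - (θ (ψi x) - θ (ψim1 x))) * δ x - τ * ⟪((K (θ (ψi x)) - K (θ (ψim1 x))) (gψi x + e)), gδ x⟫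
        ≤ (1 / (2 * L)) * (L * (ψi x - ψim1 x) - (θ (ψi x) - θ (ψim1 x))) ^ 2
          + (τ / 2) * ⟪Kinv (θ (ψi x)) (((K (θ (ψi x)) - K (θ (ψim1 x))) (gψi x + e))), ((K (θ (ψi x)) - K (θ (ψim1 x))) (gψi x + e))⟫
          + (1 / 2) * (L * δ x ^ 2 + τ * ⟪K (θ (ψi x)) (gδ x), gδ x⟫) := by
    intro x _
    set u := Kinv (θ (ψi x)) (((K (θ (ψi x)) - K (θ (ψim1 x))) (gψi x + e))) with hu
    have hKu : K (θ (ψi x)) u = ((K (θ (ψi x)) - K (θ (ψim1 x))) (gψi x + e)) := (hKinv (θ (ψi x)) (((K (θ (ψi x)) - K (θ (ψim1 x))) (gψi x + e)))).2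
    have hpos : (0 : ℝ) ≤ ⟪K (θ (ψi x)) (u + gδ x), u + gδ x⟫ := by
      have h1 := hKlower (θ (ψi x)) (u + gδ x)
      nlinarith [sq_nonneg ‖u + gδ x‖, hκm]
    have hexp : ⟪K (θ (ψi x)) (u + gδ x), u + gδ x⟫
        = ⟪K (θ (ψi x)) u, u⟫ + 2 * ⟪K (θ (ψi x)) u, gδ x⟫
          + ⟪K (θ (ψi x)) (gδ x), gδ x⟫ := by
      rw [map_add, inner_add_left, inner_add_right, inner_add_right]
      have hcomm : ⟪K (θ (ψi x)) (gδ x), u⟫ = ⟪K (θ (ψi x)) u, gδ x⟫ := by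
        rw [hKsymm, real_inner_comm]
      rw [hcomm]; ring
    have hflux_eq : ⟪K (θ (ψi x)) u, u⟫ = ⟪Kinv (θ (ψi x)) (((K (θ (ψi x)) - K (θ (ψim1 x))) (gψi x + e))), ((K (θ (ψi x)) - K (θ (ψim1 x))) (gψi x + e))⟫ := by
      rw [hKu, real_inner_comm, ← hu]
    have hdkg : ⟪((K (θ (ψi x)) - K (θ (ψim1 x))) (gψi x + e)), gδ x⟫ = ⟪K (θ (ψi x)) u, gδ x⟫ := by rw [hKu]
    have h2 : -⟪((K (θ (ψi x)) - K (θ (ψim1 x))) (gψi x + e)), gδ x⟫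
        ≤ (1 / 2) * ⟪Kinv (θ (ψi x)) (((K (θ (ψi x)) - K (θ (ψim1 x))) (gψi x + e))), ((K (θ (ψi x)) - K (θ (ψim1 x))) (gψi x + e))⟫
          + (1 / 2) * ⟪K (θ (ψi x)) (gδ x), gδ x⟫ := by
      rw [hdkg, ← hflux_eq]
      linarith [hpos, hexp]
    have h3 : (L * (ψi x - ψim1 x) - (θ (ψi x) - θ (ψim1 x))) * δ x ≤ (1 / (2 * L)) * (L * (ψi x - ψim1 x) - (θ (ψi x) - θ (ψim1 x))) ^ 2 + (L / 2) * δ x ^ 2 := by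
      have hLne : (2 * L : ℝ) ≠ 0 := by positivity
      have key3 : (0:ℝ) ≤ (1 / (2 * L)) * ((L * (ψi x - ψim1 x) - (θ (ψi x) - θ (ψim1 x))) - L * δ x) ^ 2 := by positivity
      have expand : (1 / (2 * L)) * ((L * (ψi x - ψim1 x) - (θ (ψi x) - θ (ψim1 x))) - L * δ x) ^ 2
          = (1 / (2 * L)) * (L * (ψi x - ψim1 x) - (θ (ψi x) - θ (ψim1 x))) ^ 2 - (L * (ψi x - ψim1 x) - (θ (ψi x) - θ (ψim1 x))) * δ x + (L / 2) * δ x ^ 2 := by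
        field_simp
        ring
      linarith [expand ▸ key3]
    nlinarith [mul_le_mul_of_nonneg_left h2 hτ.le, h3]
  -- integrate the pointwise bound
  have hRint : IntegrableOn (fun x =>
      (1 / (2 * L)) * (L * (ψi x - ψim1 x) - (θ (ψi x) - θ (ψim1 x))) ^ 2
        + (τ / 2) * ⟪Kinv (θ (ψi x)) (((K (θ (ψi x)) - K (θ (ψim1 x))) (gψi x + e))), ((K (θ (ψi x)) - K (θ (ψim1 x))) (gψi x + e))⟫
        + (1 / 2) * (L * δ x ^ 2 + τ * ⟪K (θ (ψi x)) (gδ x), gδ x⟫)) Ω := by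
    have i1 : IntegrableOn (fun x => (1 / (2 * L)) * (L * (ψi x - ψim1 x) - (θ (ψi x) - θ (ψim1 x))) ^ 2) Ω :=
      hI9.const_mul _
    have i2 : IntegrableOn
        (fun x => (τ / 2) * ⟪Kinv (θ (ψi x)) (((K (θ (ψi x)) - K (θ (ψim1 x))) (gψi x + e))), ((K (θ (ψi x)) - K (θ (ψim1 x))) (gψi x + e))⟫) Ω :=
      hI10.const_mul _
    have i3 : IntegrableOn (fun x =>
        (1 / 2) * (L * δ x ^ 2 + τ * ⟪K (θ (ψi x)) (gδ x), gδ x⟫)) Ω :=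
      hI8.const_mul _
    exact (i1.add i2).add i3
  have hLint : IntegrableOn (fun x => (L * (ψi x - ψim1 x) - (θ (ψi x) - θ (ψim1 x))) * δ x - τ * ⟪((K (θ (ψi x)) - K (θ (ψim1 x))) (gψi x + e)), gδ x⟫) Ω :=
    isub h_aδ (h_dkgδ.const_mul τ)
  have hmono : (∫ x in Ω, ((L * (ψi x - ψim1 x) - (θ (ψi x) - θ (ψim1 x))) * δ x - τ * ⟪((K (θ (ψi x)) - K (θ (ψim1 x))) (gψi x + e)), gδ x⟫))
      ≤ ∫ x in Ω, ((1 / (2 * L)) * (L * (ψi x - ψim1 x) - (θ (ψi x) - θ (ψim1 x))) ^ 2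
          + (τ / 2) * ⟪Kinv (θ (ψi x)) (((K (θ (ψi x)) - K (θ (ψim1 x))) (gψi x + e))), ((K (θ (ψi x)) - K (θ (ψim1 x))) (gψi x + e))⟫
          + (1 / 2) * (L * δ x ^ 2 + τ * ⟪K (θ (ψi x)) (gδ x), gδ x⟫)) :=
    setIntegral_mono_on hLint hRint hΩ hpt
  have e_L : (∫ x in Ω, ((L * (ψi x - ψim1 x) - (θ (ψi x) - θ (ψim1 x))) * δ x - τ * ⟪((K (θ (ψi x)) - K (θ (ψim1 x))) (gψi x + e)), gδ x⟫))
      = (∫ x in Ω, (L * (ψi x - ψim1 x) - (θ (ψi x) - θ (ψim1 x))) * δ x) - τ * ∫ x in Ω, ⟪((K (θ (ψi x)) - K (θ (ψim1 x))) (gψi x + e)), gδ x⟫ := by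
    rw [integral_sub h_aδ (h_dkgδ.const_mul τ), integral_const_mul]
  have e_R : (∫ x in Ω, ((1 / (2 * L)) * (L * (ψi x - ψim1 x) - (θ (ψi x) - θ (ψim1 x))) ^ 2
        + (τ / 2) * ⟪Kinv (θ (ψi x)) (((K (θ (ψi x)) - K (θ (ψim1 x))) (gψi x + e))), ((K (θ (ψi x)) - K (θ (ψim1 x))) (gψi x + e))⟫
        + (1 / 2) * (L * δ x ^ 2 + τ * ⟪K (θ (ψi x)) (gδ x), gδ x⟫)))
      = (1 / (2 * L)) * (∫ x in Ω, (L * (ψi x - ψim1 x) - (θ (ψi x) - θ (ψim1 x))) ^ 2)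
        + (τ / 2) * (∫ x in Ω, ⟪Kinv (θ (ψi x)) (((K (θ (ψi x)) - K (θ (ψim1 x))) (gψi x + e))), ((K (θ (ψi x)) - K (θ (ψim1 x))) (gψi x + e))⟫)
        + (1 / 2) * ∫ x in Ω, (L * δ x ^ 2 + τ * ⟪K (θ (ψi x)) (gδ x), gδ x⟫) := by
    have i1 : IntegrableOn (fun x =>
        (1 / (2 * L)) * (L * (ψi x - ψim1 x) - (θ (ψi x) - θ (ψim1 x))) ^ 2) Ω :=
      hI9.const_mul _
    have i2 : IntegrableOn (fun x =>
        (τ / 2) * ⟪Kinv (θ (ψi x)) (((K (θ (ψi x)) - K (θ (ψim1 x))) (gψi x + e))),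
          ((K (θ (ψi x)) - K (θ (ψim1 x))) (gψi x + e))⟫) Ω :=
      hI10.const_mul _
    have i3 : IntegrableOn (fun x =>
        (1 / 2) * (L * δ x ^ 2 + τ * ⟪K (θ (ψi x)) (gδ x), gδ x⟫)) Ω :=
      hI8.const_mul _
    have i12 : IntegrableOn (fun x =>
        (1 / (2 * L)) * (L * (ψi x - ψim1 x) - (θ (ψi x) - θ (ψim1 x))) ^ 2
        + (τ / 2) * ⟪Kinv (θ (ψi x)) (((K (θ (ψi x)) - K (θ (ψim1 x))) (gψi x + e))),
          ((K (θ (ψi x)) - K (θ (ψim1 x))) (gψi x + e))⟫) Ω := i1.add i2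
    rw [integral_add i12 i3, integral_add i1 i2,
      integral_const_mul, integral_const_mul, integral_const_mul]
  apply Real.sqrt_le_sqrt
  rw [e_L, e_R, ← key] at hmono
  have c1 : (1 / L) * (∫ x in Ω,
        (L * (ψi x - ψim1 x) - (θ (ψi x) - θ (ψim1 x))) ^ 2)
      = 2 * ((1 / (2 * L)) * ∫ x in Ω,
        (L * (ψi x - ψim1 x) - (θ (ψi x) - θ (ψim1 x))) ^ 2) := by
    have : (1 / L : ℝ) = 2 * (1 / (2 * L)) := by
      field_simp
    rw [this]; ring
  have c2 : τ * (∫ x in Ω,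
        ⟪Kinv (θ (ψi x)) ((K (θ (ψi x)) - K (θ (ψim1 x))) (gψi x + e)),
          (K (θ (ψi x)) - K (θ (ψim1 x))) (gψi x + e)⟫)
      = 2 * ((τ / 2) * ∫ x in Ω,
        ⟪Kinv (θ (ψi x)) ((K (θ (ψi x)) - K (θ (ψim1 x))) (gψi x + e)),
          (K (θ (ψi x)) - K (θ (ψim1 x))) (gψi x + e)⟫) := by ring
  rw [c1, c2]
  linarith [hmono]
end

section
/- The van Genuchten–Mualem saturation function is Lipschitz continuous: let θ_R < θ_S, α > 0 and n > 1 be real parameters, and define θ : ℝ → ℝ by θ(ψ) = θ_R + (θ_S − θ_R)·(1 + (−αψ)^n)^{−(n−1)/n} for ψ ≤ 0 and θ(ψ) = θ_S for ψ > 0 (real powers). Then there exists a constant L_θ ≥ 0 such that |θ(ψ₁) − θ(ψ₂)| ≤ L_θ·|ψ₁ − ψ₂| for all ψ₁, ψ₂ ∈ ℝ. -/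
/-!
With `t = α · max (-ψ) 0`, the saturation is `θ_R + (θ_S - θ_R) · S(t)` on all of `ℝ`, where
`S(t) = (1 + tⁿ)^{-(n-1)/n}` (the branch `ψ > 0` is `t = 0`, `S(0) = 1`). The map `ψ ↦ t` is
`α`-Lipschitz, and on `t ≥ 0` one has `|S'(t)| = (n-1) · t^{n-1} · (1 + tⁿ)^{-(n-1)/n - 1} ≤ n - 1`
because `t^{n-1} ≤ (1 + tⁿ)^{(n-1)/n}`, so the mean value inequality gives the Lipschitz constant
`|θ_S - θ_R| · (n-1) · α`.
-/

/-- The van Genuchten–Mualem saturation function: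
`θ(ψ) = θ_R + (θ_S − θ_R)·(1 + (−αψ)^n)^{−(n−1)/n}` for `ψ ≤ 0`,
and `θ(ψ) = θ_S` for `ψ > 0` (real powers). -/
noncomputable def vanGenuchten (θR θS α n : ℝ) (ψ : ℝ) : ℝ :=
  if ψ ≤ 0 then θR + (θS - θR) * (1 + (-(α * ψ)) ^ n) ^ (-(n - 1) / n)
  else θS

open Real Set

noncomputable def effectiveSaturation (n t : ℝ) : ℝ := (1 + t ^ n) ^ (-(n - 1) / n)

lemma vanGenuchten_eq_effectiveSaturation (θR θS α : ℝ) {n : ℝ} (hn : n ≠ 0) (ψ : ℝ) :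
    vanGenuchten θR θS α n ψ = θR + (θS - θR) * effectiveSaturation n (α * max (-ψ) 0) := by
  unfold vanGenuchten effectiveSaturation
  split_ifs with hψ
  · rw [max_eq_left (neg_nonneg.mpr hψ), mul_neg]
  · rw [max_eq_right (by linarith), mul_zero, zero_rpow hn, add_zero, one_rpow, mul_one]
    ring

lemma rpow_sub_one_le_one_add_rpow_rpow {n t : ℝ} (hn : 1 ≤ n) (ht : 0 ≤ t) :
    t ^ (n - 1) ≤ (1 + t ^ n) ^ ((n - 1) / n) := by
  have hn₀ : n ≠ 0 := by positivity
  calc t ^ (n - 1) = (t ^ n) ^ ((n - 1) / n) := by rw [← rpow_mul ht, mul_div_cancel₀ _ hn₀]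
    _ ≤ (1 + t ^ n) ^ ((n - 1) / n) := by
      gcongr
      linarith [rpow_nonneg ht n]

lemma hasDerivAt_effectiveSaturation {n t : ℝ} (hn : 1 ≤ n) (ht : 0 ≤ t) :
    HasDerivAt (effectiveSaturation n)
      (-((n - 1) * t ^ (n - 1) * (1 + t ^ n) ^ (-(n - 1) / n - 1))) t := by
  have hn₀ : n ≠ 0 := by positivity
  have hpos : 0 < 1 + t ^ n := by positivity
  have hinner : HasDerivAt (fun t : ℝ ↦ 1 + t ^ n) (n * t ^ (n - 1)) t :=
    (hasDerivAt_rpow_const (Or.inr hn)).const_add 1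
  refine (hinner.rpow_const (p := -(n - 1) / n) (Or.inl hpos.ne')).congr_deriv ?_
  field_simp

lemma abs_deriv_effectiveSaturation_le {n t : ℝ} (hn : 1 ≤ n) (ht : 0 ≤ t) :
    |-((n - 1) * t ^ (n - 1) * (1 + t ^ n) ^ (-(n - 1) / n - 1))| ≤ n - 1 := by
  have hpos : 0 < 1 + t ^ n := by positivity
  have hbound : t ^ (n - 1) * (1 + t ^ n) ^ (-(n - 1) / n - 1) ≤ 1 :=
    calc t ^ (n - 1) * (1 + t ^ n) ^ (-(n - 1) / n - 1)
        ≤ (1 + t ^ n) ^ ((n - 1) / n) * (1 + t ^ n) ^ (-(n - 1) / n - 1) := by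
          gcongr
          exact rpow_sub_one_le_one_add_rpow_rpow hn ht
      _ = (1 + t ^ n) ^ (-1 : ℝ) := by rw [← rpow_add hpos]; ring_nf
      _ ≤ 1 := rpow_le_one_of_one_le_of_nonpos (by linarith [rpow_nonneg ht n]) (by norm_num)
  have hn₁ : 0 ≤ n - 1 := by linarith
  rw [abs_neg, abs_of_nonneg (by positivity), mul_assoc]
  exact mul_le_of_le_one_right hn₁ hbound

lemma abs_effectiveSaturation_sub_le {n a b : ℝ} (hn : 1 ≤ n) (ha : 0 ≤ a) (hb : 0 ≤ b) :
    |effectiveSaturation n a - effectiveSaturation n b| ≤ (n - 1) * |a - b| :=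
  (convex_Ici 0).norm_image_sub_le_of_norm_hasDerivWithin_le
    (fun _ ht ↦ (hasDerivAt_effectiveSaturation hn ht).hasDerivWithinAt)
    (fun _ ht ↦ abs_deriv_effectiveSaturation_le hn ht) hb ha

theorem vanGenuchten_lipschitz_general (θR θS α n : ℝ)
    (hα : 0 < α) (hn : 1 < n) :
    ∃ Lθ : ℝ, 0 ≤ Lθ ∧ ∀ ψ₁ ψ₂ : ℝ,
      |vanGenuchten θR θS α n ψ₁ - vanGenuchten θR θS α n ψ₂| ≤ Lθ * |ψ₁ - ψ₂| := by
  have hn₁ : 0 ≤ n - 1 := by linarith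
  refine ⟨|θS - θR| * ((n - 1) * α), by positivity, fun ψ₁ ψ₂ ↦ ?_⟩
  have hmax : |max (-ψ₁) 0 - max (-ψ₂) 0| ≤ |ψ₁ - ψ₂| :=
    (abs_max_sub_max_le_abs _ _ 0).trans_eq (by rw [neg_sub_neg, abs_sub_comm])
  simp only [vanGenuchten_eq_effectiveSaturation θR θS α (by positivity : n ≠ 0)]
  calc _ = |θS - θR| * |effectiveSaturation n (α * max (-ψ₁) 0)
            - effectiveSaturation n (α * max (-ψ₂) 0)| := by rw [← abs_mul]; ring_nf
    _ ≤ |θS - θR| * ((n - 1) * |α * max (-ψ₁) 0 - α * max (-ψ₂) 0|) := by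
      gcongr
      exact abs_effectiveSaturation_sub_le hn.le (by positivity) (by positivity)
    _ = |θS - θR| * ((n - 1) * α) * |max (-ψ₁) 0 - max (-ψ₂) 0| := by
      rw [← mul_sub, abs_mul, abs_of_pos hα]; ring
    _ ≤ |θS - θR| * ((n - 1) * α) * |ψ₁ - ψ₂| := by gcongr

/-- The van Genuchten–Mualem saturation function is Lipschitz continuous:
there is `L_θ ≥ 0` with `|θ(ψ₁) − θ(ψ₂)| ≤ L_θ·|ψ₁ − ψ₂|` for all `ψ₁, ψ₂`. -/
theorem vanGenuchten_lipschitz (θR θS α n : ℝ)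
    (hθ : θR < θS) (hα : 0 < α) (hn : 1 < n) :
    ∃ Lθ : ℝ, 0 ≤ Lθ ∧ ∀ ψ₁ ψ₂ : ℝ,
      |vanGenuchten θR θS α n ψ₁ - vanGenuchten θR θS α n ψ₂| ≤ Lθ * |ψ₁ - ψ₂| :=
  vanGenuchten_lipschitz_general θR θS α n hα hn
end
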